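/- arXiv:2302.12446 — 6 statements merged into one kernel-verified Lean document; each statement's English description precedes it below -/
import Mathlib

section
/- Let G be a group of nilpotency class 2 with elements x_0,...,x_{n-1}, and let α, β be n-tuples of integers. Writing ᾱ = ∏_{i<n} x_i^{α_i} and β̄ = ∏_{i<n} x_i^{β_i}, for any central elements c, d one has [ᾱc, β̄d] = ∏_{r<s<n} [x_r, x_s]^{α_r β_s − α_s β_r}. -/
/-!
Since all commutators are central, `(a, b) ↦ [a, b]` is multiplicative in each variable, with
values in the abelian group `Z(G)`; central factors contribute nothing. Hence
`[ᾱc, β̄d] = ∏_{r,s} [x_r, x_s]^{α_r β_s}`, and pairing the factor `(s, r)` with `(r, s)` via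
`[x_s, x_r] = [x_r, x_s]⁻¹`, `[x_r, x_r] = 1` leaves the product over `r < s`.
-/

open scoped IsMulCommutative

theorem Finset.prod_prod_eq_prod_prod_lt_mul_swap {ι M : Type*} [Fintype ι] [LinearOrder ι]
    [CommMonoid M] (f : ι → ι → M) (hdiag : ∀ i, f i i = 1) :
    ∏ i, ∏ j, f i j = ∏ i, ∏ j, if i < j then f i j * f j i else 1 := by
  have hsplit : ∀ i j, f i j = (if i < j then f i j else 1) * (if j < i then f i j else 1) := by
    intro i j
    rcases lt_trichotomy i j with h | rfl | h
    · simp [h, h.not_gt]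
    · simp [hdiag]
    · simp [h, h.not_gt]
  calc ∏ i, ∏ j, f i j
      = (∏ i, ∏ j, if i < j then f i j else 1) * ∏ i, ∏ j, if j < i then f i j else 1 := by
        simp_rw [← Finset.prod_mul_distrib, ← hsplit]
    _ = (∏ i, ∏ j, if i < j then f i j else 1) * ∏ i, ∏ j, if i < j then f j i else 1 := by
        rw [Finset.prod_comm (f := fun i j => if j < i then f i j else 1)]
    _ = ∏ i, ∏ j, if i < j then f i j * f j i else 1 := by
        simp_rw [← Finset.prod_mul_distrib, ← ite_mul_one]

theorem Finset.prod_prod_zpow_mul_eq_prod_prod_lt {ι M : Type*} [Fintype ι] [LinearOrder ι]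
    [CommGroup M] (k : ι → ι → M) (hswap : ∀ i j, k j i = (k i j)⁻¹) (hdiag : ∀ i, k i i = 1)
    (a b : ι → ℤ) :
    ∏ i, ∏ j, k i j ^ (a i * b j)
      = ∏ i, ∏ j, if i < j then k i j ^ (a i * b j - a j * b i) else 1 := by
  rw [Finset.prod_prod_eq_prod_prod_lt_mul_swap _ fun i => by simp [hdiag]]
  refine Finset.prod_congr rfl fun i _ => Finset.prod_congr rfl fun j _ => ?_
  rw [hswap i j, inv_zpow', ← zpow_add, mul_comm (a j), sub_eq_add_neg]

namespace Subgroup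

variable {G : Type*} [Group G]

theorem coe_prod_ofFn (H : Subgroup G) [IsMulCommutative H] {n : ℕ} (f : Fin n → H) :
    ((∏ i, f i : H) : G) = (List.ofFn fun i => (f i : G)).prod := by
  rw [← List.prod_ofFn, SubmonoidClass.coe_list_prod, List.map_ofFn]
  rfl

variable (hnil : ∀ x y : G, x⁻¹ * y⁻¹ * x * y ∈ center G)
include hnil

theorem commutator_mul_left_of_forall_mem_center (a b c : G) :
    (a * b)⁻¹ * c⁻¹ * (a * b) * c = (a⁻¹ * c⁻¹ * a * c) * (b⁻¹ * c⁻¹ * b * c) := by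
  have hz := mem_center_iff.mp (hnil a c)
  calc (a * b)⁻¹ * c⁻¹ * (a * b) * c = b⁻¹ * (a⁻¹ * c⁻¹ * a * c) * (c⁻¹ * b * c) := by group
    _ = (a⁻¹ * c⁻¹ * a * c) * b⁻¹ * (c⁻¹ * b * c) := by rw [hz]
    _ = (a⁻¹ * c⁻¹ * a * c) * (b⁻¹ * c⁻¹ * b * c) := by group

theorem commutator_mul_right_of_forall_mem_center (a b c : G) :
    a⁻¹ * (b * c)⁻¹ * a * (b * c) = (a⁻¹ * b⁻¹ * a * b) * (a⁻¹ * c⁻¹ * a * c) := by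
  have hz := mem_center_iff.mp (hnil a b)
  calc a⁻¹ * (b * c)⁻¹ * a * (b * c) = a⁻¹ * c⁻¹ * a * ((a⁻¹ * b⁻¹ * a * b) * c) := by group
    _ = a⁻¹ * c⁻¹ * a * c * (a⁻¹ * b⁻¹ * a * b) := by rw [← hz]; group
    _ = (a⁻¹ * b⁻¹ * a * b) * (a⁻¹ * c⁻¹ * a * c) := hz _

/-- The commutator `[a, b] = a⁻¹ * b⁻¹ * a * b` (not Mathlib's `⁅a, b⁆ = a * b * a⁻¹ * b⁻¹`). -/
def commutatorBihom : G →* G →* center G :=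
  MonoidHom.mk'
    (fun a => MonoidHom.mk' (fun b => ⟨a⁻¹ * b⁻¹ * a * b, hnil a b⟩)
      fun b c => Subtype.ext (commutator_mul_right_of_forall_mem_center hnil a b c))
    fun a b => MonoidHom.ext fun c =>
      Subtype.ext (commutator_mul_left_of_forall_mem_center hnil a b c)

@[simp]
theorem coe_commutatorBihom_apply (a b : G) :
    (commutatorBihom hnil a b : G) = a⁻¹ * b⁻¹ * a * b :=
  rfl

theorem commutatorBihom_eq_one_of_mem_center {z : G} (hz : z ∈ center G) :
    commutatorBihom hnil z = 1 :=
  MonoidHom.ext fun g => Subtype.ext <| by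
    rw [MonoidHom.one_apply, OneMemClass.coe_one, coe_commutatorBihom_apply, mul_assoc z⁻¹,
      mem_center_iff.mp hz g⁻¹]
    group

theorem commutatorBihom_apply_eq_one_of_mem_center (a : G) {z : G} (hz : z ∈ center G) :
    commutatorBihom hnil a z = 1 :=
  Subtype.ext <| by
    rw [coe_commutatorBihom_apply, OneMemClass.coe_one, mul_assoc (a⁻¹ * z⁻¹),
      mem_center_iff.mp hz a]
    group

theorem commutatorBihom_mul_mem_center_mul_mem_center (a b : G) {c d : G}
    (hc : c ∈ center G) (hd : d ∈ center G) :
    commutatorBihom hnil (a * c) (b * d) = commutatorBihom hnil a b := by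
  rw [map_mul (commutatorBihom hnil) a c, MonoidHom.mul_apply,
    commutatorBihom_eq_one_of_mem_center hnil hc, MonoidHom.one_apply, mul_one, map_mul,
    commutatorBihom_apply_eq_one_of_mem_center hnil a hd, mul_one]

theorem commutatorBihom_swap (a b : G) :
    commutatorBihom hnil b a = (commutatorBihom hnil a b)⁻¹ :=
  Subtype.ext <| by simp only [coe_commutatorBihom_apply, InvMemClass.coe_inv]; group

theorem commutatorBihom_self (a : G) : commutatorBihom hnil a a = 1 :=
  Subtype.ext <| by simp only [coe_commutatorBihom_apply, OneMemClass.coe_one]; group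

end Subgroup

theorem MonoidHom.map_prod_ofFn_zpow₂ {G H M : Type*} [Group G] [Group H] [CommGroup M]
    (f : G →* H →* M) {m n : ℕ} (x : Fin m → G) (y : Fin n → H) (α : Fin m → ℤ)
    (β : Fin n → ℤ) :
    f (List.ofFn fun i => x i ^ α i).prod (List.ofFn fun j => y j ^ β j).prod
      = ∏ i, ∏ j, f (x i) (y j) ^ (α i * β j) := by
  simp only [map_list_prod, List.map_ofFn, List.prod_ofFn, Function.comp_def, map_zpow,
    MonoidHom.finsetProd_apply, MonoidHom.zpow_apply, ← Finset.prod_zpow, ← zpow_mul]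
  exact Finset.prod_comm

/-- In a group of nilpotency class 2, with `ᾱ = ∏_{i<n} x_i^{α_i}` and
`β̄ = ∏_{i<n} x_i^{β_i}` (products in order of increasing index) and central
elements `c, d`, one has `[ᾱc, β̄d] = ∏_{r<s<n} [x_r, x_s]^{α_r β_s − α_s β_r}`. -/
theorem stmt2 {G : Type*} [Group G]
    (hnil : ∀ x y : G, x⁻¹ * y⁻¹ * x * y ∈ Subgroup.center G)
    (n : ℕ) (x : Fin n → G) (α β : Fin n → ℤ) (c d : G)
    (hc : c ∈ Subgroup.center G) (hd : d ∈ Subgroup.center G) :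
    ((List.ofFn fun i => x i ^ α i).prod * c)⁻¹ *
      ((List.ofFn fun i => x i ^ β i).prod * d)⁻¹ *
      ((List.ofFn fun i => x i ^ α i).prod * c) *
      ((List.ofFn fun i => x i ^ β i).prod * d)
    = (List.ofFn fun r : Fin n => (List.ofFn fun s : Fin n =>
        if r < s then ((x r)⁻¹ * (x s)⁻¹ * x r * x s) ^ (α r * β s - α s * β r)
        else 1).prod).prod := by
  open Subgroup in
  rw [← coe_commutatorBihom_apply hnil,
    commutatorBihom_mul_mem_center_mul_mem_center hnil _ _ hc hd, MonoidHom.map_prod_ofFn_zpow₂,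
    Finset.prod_prod_zpow_mul_eq_prod_prod_lt _ (fun _ _ => commutatorBihom_swap hnil _ _)
      fun _ => commutatorBihom_self hnil _]
  simp only [coe_prod_ofFn, apply_ite Subtype.val, SubgroupClass.coe_zpow,
    coe_commutatorBihom_apply, OneMemClass.coe_one]
end

section
/- Let E be a group of exponent p (p an odd prime) and nilpotency class 2, generated by elements x_0, x_1, x_2, ... together with a central element z of order p, such that [x_i, x_k] = z for all i < k. Then E has no abelian subgroup of finite index. -/
/-- Key commutator computation in a class-2-type setting: if `[a,b] = [a,c] = [b,c] = z`
with `z` central, then `[a⁻¹*b, a⁻¹*c] = z`. -/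
lemma stmt5_key {G : Type*} [Group G] (a b c z : G) (hz : ∀ g : G, z * g = g * z)
    (h1 : a⁻¹ * b⁻¹ * a * b = z) (h2 : a⁻¹ * c⁻¹ * a * c = z)
    (h3 : b⁻¹ * c⁻¹ * b * c = z) :
    (a⁻¹ * b)⁻¹ * (a⁻¹ * c)⁻¹ * (a⁻¹ * b) * (a⁻¹ * c) = z := by
  have e1 : b⁻¹ * a * b = a * z := by rw [← h1]; group
  have e2 : c⁻¹ * a * c = a * z := by rw [← h2]; group
  have e2' : c⁻¹ * a⁻¹ * c = (a * z)⁻¹ := by rw [← e2]; group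
  have e3 : c⁻¹ * b = b * z * c⁻¹ := by rw [← h3]; group
  calc (a⁻¹ * b)⁻¹ * (a⁻¹ * c)⁻¹ * (a⁻¹ * b) * (a⁻¹ * c)
      = b⁻¹ * a * (c⁻¹ * b) * a⁻¹ * c := by group
    _ = b⁻¹ * a * (b * z * c⁻¹) * a⁻¹ * c := by rw [e3]
    _ = (b⁻¹ * a * b) * (z * (c⁻¹ * a⁻¹ * c)) := by group
    _ = (a * z) * (z * (a * z)⁻¹) := by rw [e1, e2']
    _ = a * z * a⁻¹ := by group
    _ = z := by rw [← hz a]; group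

/-- Let `E` be a group of exponent `p` (an odd prime) and nilpotency class 2,
generated by elements `x_0, x_1, ...` together with a central element `z` of
order `p`, such that `[x_i, x_k] = z` for all `i < k`. Then `E` has no abelian
subgroup of finite index. -/
theorem stmt5 {p : ℕ} (hp : p.Prime) (hodd : Odd p) {E : Type*} [Group E]
    (hexp : ∀ g : E, g ^ p = 1)
    (hnil : ∀ a b : E, a⁻¹ * b⁻¹ * a * b ∈ Subgroup.center E)
    (x : ℕ → E) (z : E)
    (hzc : z ∈ Subgroup.center E) (hz1 : z ≠ 1) (hord : orderOf z = p)
    (hgen : Subgroup.closure (Set.range x ∪ {z}) = ⊤)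
    (hcomm : ∀ i k : ℕ, i < k → (x i)⁻¹ * (x k)⁻¹ * x i * x k = z) :
    ¬ ∃ M : Subgroup E, M.FiniteIndex ∧ ∀ a ∈ M, ∀ b ∈ M, a * b = b * a := by
  rintro ⟨M, hfi, habel⟩
  -- the quotient by M is finite
  haveI : Finite (E ⧸ M) := M.finite_quotient_of_finiteIndex
  -- pigeonhole: some coset contains x n for infinitely many n
  obtain ⟨q, hq⟩ := Finite.exists_infinite_fiber (fun n : ℕ => (QuotientGroup.mk (x n) : E ⧸ M))
  have hS : ((fun n : ℕ => (QuotientGroup.mk (x n) : E ⧸ M)) ⁻¹' {q}).Infinite :=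
    Set.infinite_coe_iff.mp hq
  obtain ⟨k, hk⟩ := hS.nonempty
  obtain ⟨r, hr, hkr⟩ := hS.exists_gt k
  obtain ⟨s, hs, hrs⟩ := hS.exists_gt r
  have hmkkr : (QuotientGroup.mk (x k) : E ⧸ M) = QuotientGroup.mk (x r) := by
    simp only [Set.mem_preimage, Set.mem_singleton_iff] at hk hr
    rw [hk, hr]
  have hmkks : (QuotientGroup.mk (x k) : E ⧸ M) = QuotientGroup.mk (x s) := by
    simp only [Set.mem_preimage, Set.mem_singleton_iff] at hk hs
    rw [hk, hs]
  have ha : (x k)⁻¹ * x r ∈ M := QuotientGroup.eq.mp hmkkr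
  have hb : (x k)⁻¹ * x s ∈ M := QuotientGroup.eq.mp hmkks
  have hz : ∀ g : E, z * g = g * z := fun g => (Subgroup.mem_center_iff.mp hzc g).symm
  have hkey : ((x k)⁻¹ * x r)⁻¹ * ((x k)⁻¹ * x s)⁻¹ * ((x k)⁻¹ * x r) * ((x k)⁻¹ * x s) = z :=
    stmt5_key (x k) (x r) (x s) z hz (hcomm k r hkr) (hcomm k s (hkr.trans hrs)) (hcomm r s hrs)
  have hcommute := habel _ ha _ hb
  apply hz1
  rw [← hkey]
  rw [mul_assoc, hcommute]
  group
end

section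
/- Let E be a group of exponent p and nilpotency class 2 with generators x_i (i ∈ ℕ) and a nontrivial central element z satisfying [x_i, x_k] = z for i < k. If M ≤ E is a subgroup of finite index, then there exist indices k < r < s with x_r x_k⁻¹ ∈ M and x_s x_k⁻¹ ∈ M, and these two elements of M satisfy [x_r x_k⁻¹, x_s x_k⁻¹] = z ≠ 1, so M is nonabelian. -/
private lemma key_comm {G : Type*} [Group G] {a b c z : G}
    (hz : ∀ g : G, g * z = z * g)
    (hca : c⁻¹ * a⁻¹ * c * a = z) (hcb : c⁻¹ * b⁻¹ * c * b = z)
    (hab : a⁻¹ * b⁻¹ * a * b = z) :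
    (a * c⁻¹)⁻¹ * (b * c⁻¹)⁻¹ * (a * c⁻¹) * (b * c⁻¹) = z := by
  have hab' : b⁻¹ * a * b = a * z := by rw [← hab]; group
  have hcb' : b⁻¹ * c * b = c * z := by rw [← hcb]; group
  have Hca : c * a = a * c * z := by rw [← hca]; group
  -- conjugation by b fixes a * c⁻¹
  have h1 : b⁻¹ * (a * c⁻¹) * b = a * c⁻¹ := by
    calc b⁻¹ * (a * c⁻¹) * b = (b⁻¹ * a * b) * (b⁻¹ * c * b)⁻¹ := by group
      _ = (a * z) * (c * z)⁻¹ := by rw [hab', hcb']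
      _ = a * c⁻¹ := by group
  -- conjugation by c⁻¹ multiplies a * c⁻¹ by z
  have h2 : c * (a * c⁻¹) * c⁻¹ = a * c⁻¹ * z := by
    have hcac : c * a * c⁻¹ = a * z := by
      calc c * a * c⁻¹ = a * c * (z * c⁻¹) := by rw [Hca]; group
        _ = a * c * (c⁻¹ * z) := by rw [← hz c⁻¹]
        _ = a * z := by group
    calc c * (a * c⁻¹) * c⁻¹ = (c * a * c⁻¹) * c⁻¹ := by group
      _ = (a * z) * c⁻¹ := by rw [hcac]
      _ = a * (z * c⁻¹) := by group
      _ = a * (c⁻¹ * z) := by rw [← hz c⁻¹]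
      _ = a * c⁻¹ * z := by group
  have key : (b * c⁻¹)⁻¹ * (a * c⁻¹) * (b * c⁻¹) = (a * c⁻¹) * z := by
    calc (b * c⁻¹)⁻¹ * (a * c⁻¹) * (b * c⁻¹)
        = c * (b⁻¹ * (a * c⁻¹) * b) * c⁻¹ := by group
      _ = c * (a * c⁻¹) * c⁻¹ := by rw [h1]
      _ = (a * c⁻¹) * z := h2
  calc (a * c⁻¹)⁻¹ * (b * c⁻¹)⁻¹ * (a * c⁻¹) * (b * c⁻¹)
      = (a * c⁻¹)⁻¹ * ((b * c⁻¹)⁻¹ * (a * c⁻¹) * (b * c⁻¹)) := by group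
    _ = (a * c⁻¹)⁻¹ * ((a * c⁻¹) * z) := by rw [key]
    _ = z := by group

/-- Let `E` be of exponent `p`, nilpotency class 2, with generators `x_i` and a
nontrivial central `z` satisfying `[x_i, x_k] = z` for `i < k`. If `M ≤ E` has
finite index, then there are `k < r < s` with `x_r x_k⁻¹ ∈ M`, `x_s x_k⁻¹ ∈ M`,
`[x_r x_k⁻¹, x_s x_k⁻¹] = z ≠ 1`, and hence `M` is nonabelian. -/
theorem stmt6 {p : ℕ} (hp : p.Prime) (hodd : Odd p) {E : Type*} [Group E]
    (hexp : ∀ g : E, g ^ p = 1)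
    (hnil : ∀ a b : E, a⁻¹ * b⁻¹ * a * b ∈ Subgroup.center E)
    (x : ℕ → E) (z : E)
    (hzc : z ∈ Subgroup.center E) (hz1 : z ≠ 1)
    (hgen : Subgroup.closure (Set.range x ∪ {z}) = ⊤)
    (hcomm : ∀ i k : ℕ, i < k → (x i)⁻¹ * (x k)⁻¹ * x i * x k = z)
    (M : Subgroup E) (hM : M.FiniteIndex) :
    (∃ k r s : ℕ, k < r ∧ r < s ∧
      x r * (x k)⁻¹ ∈ M ∧ x s * (x k)⁻¹ ∈ M ∧
      (x r * (x k)⁻¹)⁻¹ * (x s * (x k)⁻¹)⁻¹ * (x r * (x k)⁻¹) * (x s * (x k)⁻¹) = z) ∧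
    ¬ (∀ a ∈ M, ∀ b ∈ M, a * b = b * a) := by
  haveI := hM
  have hz : ∀ g : E, g * z = z * g := Subgroup.mem_center_iff.mp hzc
  -- pigeonhole: infinitely many (x i)⁻¹ land in the same coset of M
  have hfin : Finite (E ⧸ M) := inferInstance
  set f : ℕ → E ⧸ M := fun i => QuotientGroup.mk ((x i)⁻¹) with hf
  obtain ⟨y, hy⟩ := Finite.exists_infinite_fiber f
  have hyinf : (f ⁻¹' {y}).Infinite := Set.infinite_coe_iff.mp hy
  obtain ⟨k, hk, -⟩ := hyinf.exists_gt 0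
  obtain ⟨r, hr, hkr⟩ := hyinf.exists_gt k
  obtain ⟨s, hs, hrs⟩ := hyinf.exists_gt r
  have hmem : ∀ i j : ℕ, i ∈ f ⁻¹' {y} → j ∈ f ⁻¹' {y} → x i * (x j)⁻¹ ∈ M := by
    intro i j hi hj
    have heq : f i = f j := by
      simp only [Set.mem_preimage, Set.mem_singleton_iff] at hi hj
      rw [hi, hj]
    rw [hf] at heq
    have := QuotientGroup.eq.mp heq
    simpa using this
  have hrM : x r * (x k)⁻¹ ∈ M := hmem r k hr hk
  have hsM : x s * (x k)⁻¹ ∈ M := hmem s k hs hk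
  have hkey : (x r * (x k)⁻¹)⁻¹ * (x s * (x k)⁻¹)⁻¹ * (x r * (x k)⁻¹) * (x s * (x k)⁻¹) = z :=
    key_comm hz (hcomm k r hkr) (hcomm k s (hkr.trans hrs)) (hcomm r s hrs)
  refine ⟨⟨k, r, s, hkr, hrs, hrM, hsM, hkey⟩, ?_⟩
  intro habel
  have hc := habel _ hrM _ hsM
  apply hz1
  rw [← hkey]
  rw [show (x r * (x k)⁻¹)⁻¹ * (x s * (x k)⁻¹)⁻¹ * (x r * (x k)⁻¹) * (x s * (x k)⁻¹)
      = (x r * (x k)⁻¹)⁻¹ * (x s * (x k)⁻¹)⁻¹ * ((x r * (x k)⁻¹) * (x s * (x k)⁻¹)) by group,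
    hc]
  group
end

section
/- Let H be the group in the variety of exponent-p class-2 nilpotent groups (p an odd prime) with generators x_i (i ∈ ℕ) and z_k (k ≥ 1), subject to [x_i, x_k] = z_k for i < k, where the z_k are linearly independent over ℤ/pℤ in the centre. Then H is residually a finite p-group: for every h ∈ H with h ≠ 1 there is a normal subgroup N of H such that H/N is a finite p-group and h ∉ N. -/
namespace Stmt10Aux

variable {H : Type*} [Group H]

/-- The commutator convention used in this problem. -/
def cmm (a b : H) : H := a⁻¹ * b⁻¹ * a * b

theorem cmm_comm_all (hnil : ∀ a b : H, a⁻¹ * b⁻¹ * a * b ∈ Subgroup.center H)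
    (a b g : H) : g * cmm a b = cmm a b * g :=
  Subgroup.mem_center_iff.mp (hnil a b) g

theorem cmm_mul_left (hnil : ∀ a b : H, a⁻¹ * b⁻¹ * a * b ∈ Subgroup.center H)
    (a b c : H) : cmm (a * b) c = cmm a c * cmm b c := by
  have h := cmm_comm_all hnil a c b⁻¹
  calc cmm (a*b) c = b⁻¹ * (cmm a c) * (c⁻¹ * b * c) := by unfold cmm; group
    _ = cmm a c * b⁻¹ * (c⁻¹ * b * c) := by rw [h]
    _ = cmm a c * cmm b c := by unfold cmm; group

theorem cmm_inv_symm (a b : H) : (cmm a b)⁻¹ = cmm b a := by unfold cmm; group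

theorem cmm_swap (a b : H) : a * b = b * a * cmm a b := by unfold cmm; group

theorem cmm_eq_one (a b : H) (h : a * b = b * a) : cmm a b = 1 := by
  unfold cmm
  rw [show a⁻¹ * b⁻¹ * a * b = a⁻¹ * b⁻¹ * (a * b) by group, h]
  group

theorem cmm_mul_right (hnil : ∀ a b : H, a⁻¹ * b⁻¹ * a * b ∈ Subgroup.center H)
    (a b c : H) : cmm a (b * c) = cmm a b * cmm a c := by
  rw [← cmm_inv_symm (b*c) a, cmm_mul_left hnil, mul_inv_rev, cmm_inv_symm, cmm_inv_symm,
    cmm_comm_all hnil a b (cmm a c)]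

/-- left commutator hom -/
def lhom (hnil : ∀ a b : H, a⁻¹ * b⁻¹ * a * b ∈ Subgroup.center H) (c : H) : H →* H :=
  MonoidHom.mk' (fun a => cmm a c) (fun a b => cmm_mul_left hnil a b c)

/-- right commutator hom -/
def rhom (hnil : ∀ a b : H, a⁻¹ * b⁻¹ * a * b ∈ Subgroup.center H) (a : H) : H →* H :=
  MonoidHom.mk' (fun b => cmm a b) (fun b c => cmm_mul_right hnil a b c)

theorem cmm_zpow_left (hnil : ∀ a b : H, a⁻¹ * b⁻¹ * a * b ∈ Subgroup.center H)
    (a c : H) (s : ℤ) : cmm (a ^ s) c = cmm a c ^ s := by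
  simpa [lhom] using (lhom hnil c).map_zpow a s

theorem cmm_one_left (hnil : ∀ a b : H, a⁻¹ * b⁻¹ * a * b ∈ Subgroup.center H)
    (c : H) : cmm (1 : H) c = 1 := by
  simpa [lhom] using (lhom hnil c).map_one

theorem cmm_center_right (a g : H) (hg : g ∈ Subgroup.center H) : cmm a g = 1 :=
  cmm_eq_one _ _ (Subgroup.mem_center_iff.mp hg a)

theorem cmm_center_left (a g : H) (hg : g ∈ Subgroup.center H) : cmm g a = 1 :=
  cmm_eq_one _ _ ((Subgroup.mem_center_iff.mp hg a).symm)


section Prod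

variable (x z : ℕ → H)

/-- ordered product of powers of the `x i`. -/
def Pl (a : ℕ → ℤ) (n : ℕ) : H := ((List.range n).map fun i => x i ^ a i).prod

/-- product of powers of the `z j`, `1 ≤ j ≤ n`. -/
def Zp (b : ℕ → ℤ) (n : ℕ) : H := (List.ofFn fun k : Fin n => z (k + 1) ^ b (k + 1)).prod

@[simp] theorem Pl_zero (a : ℕ → ℤ) : Pl x a 0 = 1 := by simp [Pl]

theorem Pl_succ (a : ℕ → ℤ) (n : ℕ) : Pl x a (n + 1) = Pl x a n * x n ^ a n := by
  simp [Pl, List.range_succ]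

theorem Pl_congr {a b : ℕ → ℤ} (n : ℕ) (h : ∀ i, i < n → a i = b i) :
    Pl x a n = Pl x b n := by
  induction n with
  | zero => simp
  | succ n ih =>
    rw [Pl_succ, Pl_succ, ih (fun i hi => h i (by omega)), h n (by omega)]

theorem Pl_zero_fun (n : ℕ) : Pl x (fun _ => (0:ℤ)) n = 1 := by
  induction n with
  | zero => simp
  | succ n ih => rw [Pl_succ, ih]; simp

theorem Pl_eq_one {a : ℕ → ℤ} (n : ℕ) (h : ∀ i, i < n → a i = 0) : Pl x a n = 1 := by
  rw [Pl_congr x n (b := fun _ => 0) h, Pl_zero_fun]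

theorem Pl_extend {a : ℕ → ℤ} {n m : ℕ} (hnm : n ≤ m) (h : ∀ i, n ≤ i → a i = 0) :
    Pl x a m = Pl x a n := by
  induction m, hnm using Nat.le_induction with
  | base => rfl
  | succ m hm ih => rw [Pl_succ, ih, h m (by omega)]; simp

@[simp] theorem Zp_zero (b : ℕ → ℤ) : Zp z b 0 = 1 := by simp [Zp]

theorem Zp_succ (b : ℕ → ℤ) (n : ℕ) : Zp z b (n + 1) = Zp z b n * z (n + 1) ^ b (n + 1) := by
  rw [Zp, List.ofFn_succ', List.concat_eq_append, List.prod_append]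
  simp [Zp]

end Prod

section ZC

variable (x z : ℕ → H) (hzc : ∀ k : ℕ, 1 ≤ k → z k ∈ Subgroup.center H)
include hzc

theorem Zp_center (b : ℕ → ℤ) (n : ℕ) : Zp z b n ∈ Subgroup.center H := by
  induction n with
  | zero => simp
  | succ n ih =>
    rw [Zp_succ]
    exact Subgroup.mul_mem _ ih (Subgroup.zpow_mem _ (hzc (n+1) (by omega)) _)

theorem Zp_comm_all (b : ℕ → ℤ) (n : ℕ) (g : H) : g * Zp z b n = Zp z b n * g :=
  Subgroup.mem_center_iff.mp (Zp_center z hzc b n) g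

theorem Zp_add (b c : ℕ → ℤ) (n : ℕ) : Zp z b n * Zp z c n = Zp z (b + c) n := by
  induction n with
  | zero => simp
  | succ n ih =>
    rw [Zp_succ, Zp_succ, Zp_succ]
    have h1 : z (n+1) ^ b (n+1) * Zp z c n = Zp z c n * z (n+1) ^ b (n+1) :=
      Zp_comm_all z hzc c n _
    calc Zp z b n * z (n+1) ^ b (n+1) * (Zp z c n * z (n+1) ^ c (n+1))
        = Zp z b n * (z (n+1) ^ b (n+1) * Zp z c n) * z (n+1) ^ c (n+1) := by group
      _ = Zp z b n * (Zp z c n * z (n+1) ^ b (n+1)) * z (n+1) ^ c (n+1) := by rw [h1]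
      _ = (Zp z b n * Zp z c n) * (z (n+1) ^ b (n+1) * z (n+1) ^ c (n+1)) := by group
      _ = Zp z (b + c) n * z (n+1) ^ (b + c) (n+1) := by
          rw [ih, ← zpow_add]; rfl

omit hzc in
theorem Zp_congr {b c : ℕ → ℤ} (n : ℕ) (h : ∀ j, 1 ≤ j → j ≤ n → b j = c j) :
    Zp z b n = Zp z c n := by
  induction n with
  | zero => simp
  | succ n ih =>
    rw [Zp_succ, Zp_succ, ih (fun j h1 h2 => h j h1 (by omega)), h (n+1) (by omega) (by omega)]

omit hzc in
theorem Zp_zero_fun (n : ℕ) : Zp z (fun _ => (0:ℤ)) n = 1 := by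
  induction n with
  | zero => simp
  | succ n ih => rw [Zp_succ, ih]; simp

omit hzc in
theorem Zp_eq_one {b : ℕ → ℤ} (n : ℕ) (h : ∀ j, 1 ≤ j → j ≤ n → b j = 0) : Zp z b n = 1 := by
  rw [Zp_congr z n (c := fun _ => 0) h, Zp_zero_fun]

omit hzc in
theorem Zp_extend {b : ℕ → ℤ} {n m : ℕ} (hnm : n ≤ m) (h : ∀ j, n < j → b j = 0) :
    Zp z b m = Zp z b n := by
  induction m, hnm using Nat.le_induction with
  | base => rfl
  | succ m hm ih => rw [Zp_succ, ih, h (m+1) (by omega)]; simp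

theorem Zp_inv (b : ℕ → ℤ) (n : ℕ) : (Zp z b n)⁻¹ = Zp z (-b) n := by
  apply inv_eq_of_mul_eq_one_right
  rw [Zp_add z hzc]
  exact Zp_eq_one z (b := b + -b) n (fun j _ _ => by simp)

omit hzc in
theorem Zp_single {t : ℕ} (ht : 1 ≤ t) (E : ℤ) :
    Zp z (fun j => if j = t then E else 0) t = z t ^ E := by
  obtain ⟨s, rfl⟩ : ∃ s, t = s + 1 := ⟨t - 1, by omega⟩
  rw [Zp_succ, Zp_eq_one z (s) (fun j h1 h2 => by rw [if_neg (by omega)])]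
  simp

end ZC


section Comm

variable (x z : ℕ → H)
variable (hnil : ∀ a b : H, a⁻¹ * b⁻¹ * a * b ∈ Subgroup.center H)
variable (hrel : ∀ i k : ℕ, i < k → (x i)⁻¹ * (x k)⁻¹ * x i * x k = z k)
variable (hzc : ∀ k : ℕ, 1 ≤ k → z k ∈ Subgroup.center H)
include hnil hrel

omit hnil in
theorem cmm_x_lt {i k : ℕ} (h : i < k) : cmm (x i) (x k) = z k := hrel i k h

omit hnil in
theorem cmm_x_gt {i k : ℕ} (h : k < i) : cmm (x i) (x k) = (z i)⁻¹ := by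
  rw [← cmm_inv_symm, show cmm (x k) (x i) = z i from hrel k i h]

theorem Ctop (a : ℕ → ℤ) {M t : ℕ} (h : M ≤ t) :
    cmm (Pl x a M) (x t) = z t ^ (∑ i ∈ Finset.range M, a i) := by
  induction M with
  | zero => simp [cmm_one_left hnil]
  | succ M ih =>
    rw [Pl_succ, cmm_mul_left hnil, ih (by omega), cmm_zpow_left hnil,
      cmm_x_lt x z hrel (show M < t by omega), ← zpow_add, Finset.sum_range_succ]

theorem Cbot (a : ℕ → ℤ) (M : ℕ) :
    cmm (Pl x a (M + 1)) (x 0) = Zp z (fun j => -(a j)) M := by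
  induction M with
  | zero =>
    rw [Pl_succ, Pl_zero, one_mul, cmm_zpow_left hnil, cmm_eq_one _ _ rfl]
    simp
  | succ M ih =>
    rw [Pl_succ, cmm_mul_left hnil, ih, cmm_zpow_left hnil,
      cmm_x_gt x z hrel (show 0 < M + 1 by omega), Zp_succ]
    rw [inv_zpow, ← zpow_neg]

theorem cmm_xpow_Pl (b : ℕ → ℤ) {n t : ℕ} (h : n ≤ t) (s : ℤ) :
    cmm (x t ^ s) (Pl x b n) = z t ^ (-(s * ∑ i ∈ Finset.range n, b i)) := by
  rw [cmm_zpow_left hnil, ← cmm_inv_symm (Pl x b n), Ctop x z hnil hrel b h]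
  rw [← zpow_neg, ← zpow_mul]
  ring_nf

include hzc

theorem Pl_mul (n : ℕ) (a b : ℕ → ℤ) :
    ∃ c : ℕ → ℤ, (∀ j, c j ≠ 0 → j < n ∧ a j ≠ 0 ∧ ∃ i, i < j ∧ b i ≠ 0) ∧
      Pl x a n * Pl x b n = Pl x (a + b) n * Zp z c n := by
  induction n with
  | zero => exact ⟨fun _ => 0, fun j hj => absurd rfl hj, by simp⟩
  | succ n ih =>
    obtain ⟨c, hc, heq⟩ := ih
    set E : ℤ := -(a n * ∑ i ∈ Finset.range n, b i) with hE
    refine ⟨fun j => if j = n then E else c j, ?_, ?_⟩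
    · intro j hj
      have hj2 : (if j = n then E else c j) ≠ 0 := hj
      by_cases hjn : j = n
      · subst hjn
        rw [if_pos rfl] at hj2
        have ha : a j ≠ 0 := by
          intro h0; apply hj2; rw [hE, h0]; ring
        have hb : ∃ i, i < j ∧ b i ≠ 0 := by
          by_contra hco
          push_neg at hco
          apply hj2
          rw [hE, Finset.sum_eq_zero (fun i hi => hco i (Finset.mem_range.mp hi))]
          ring
        exact ⟨by omega, ha, hb⟩
      · rw [if_neg hjn] at hj2
        obtain ⟨h1, h2, h3⟩ := hc j hj2
        exact ⟨by omega, h2, h3⟩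
    · have hcn : c n = 0 := by
        by_contra hcn; exact absurd (hc n hcn).1 (lt_irrefl n)
      have hcn1 : c (n+1) = 0 := by
        by_contra hcn; have := (hc (n+1) hcn).1; omega
      have key : x n ^ a n * Pl x b n = Pl x b n * x n ^ a n * z n ^ E := by
        rw [cmm_swap (x n ^ a n) (Pl x b n), cmm_xpow_Pl x z hnil hrel b (le_refl n)]
      have hzE : ∀ g : H, g * z n ^ E = z n ^ E * g := by
        intro g
        rcases Nat.eq_zero_or_pos n with h0 | h0
        · subst h0
          have : E = 0 := by rw [hE]; simp
          rw [this]; simp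
        · exact Subgroup.mem_center_iff.mp (Subgroup.zpow_mem _ (hzc n h0) _) g
      have hZc : ∀ g : H, g * Zp z c n = Zp z c n * g := Zp_comm_all z hzc c n
      calc Pl x a (n+1) * Pl x b (n+1)
          = Pl x a n * (x n ^ a n * Pl x b n) * x n ^ b n := by
            rw [Pl_succ, Pl_succ]; group
        _ = Pl x a n * (Pl x b n * x n ^ a n * z n ^ E) * x n ^ b n := by rw [key]
        _ = (Pl x a n * Pl x b n) * (x n ^ a n * (z n ^ E * x n ^ b n)) := by group
        _ = (Pl x a n * Pl x b n) * (x n ^ a n * (x n ^ b n * z n ^ E)) := by rw [hzE]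
        _ = (Pl x (a+b) n * Zp z c n) * (x n ^ (a n + b n) * z n ^ E) := by
            rw [heq, zpow_add]; group
        _ = Pl x (a+b) n * (Zp z c n * x n ^ (a n + b n)) * z n ^ E := by group
        _ = Pl x (a+b) n * (x n ^ (a n + b n) * Zp z c n) * z n ^ E := by rw [hZc]
        _ = Pl x (a+b) (n+1) * (Zp z c n * z n ^ E) := by
            rw [Pl_succ]
            have : (a + b) n = a n + b n := rfl
            rw [this]; group
        _ = Pl x (a+b) (n+1) * Zp z (fun j => if j = n then E else c j) (n+1) := by
            congr 1
            rcases Nat.eq_zero_or_pos n with h0 | h0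
            · subst h0
              have hE0 : E = 0 := by rw [hE]; simp
              rw [Zp_succ, if_neg (show ¬(0+1 = 0) by omega), hcn1, Zp_zero, Zp_zero, hE0]
              simp
            · obtain ⟨m, rfl⟩ : ∃ m, n = m + 1 := ⟨n - 1, by omega⟩
              have hR : Zp z (fun j => if j = m+1 then E else c j) (m+1+1)
                  = Zp z c m * z (m+1) ^ E := by
                rw [Zp_succ, Zp_succ, if_pos rfl, if_neg (show ¬(m+1+1 = m+1) by omega),
                  hcn1,
                  Zp_congr z (b := fun j => if j = m+1 then E else c j) (c := c) m
                    (fun j h1 h2 => by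
                      show (if j = m+1 then E else c j) = c j
                      rw [if_neg (by omega)])]
                simp
              rw [hR, Zp_succ, hcn]
              simp

theorem mem_XZ {I J : Set ℕ} (hIJ : ∀ i j, i ∈ I → j ∈ I → i < j → j ∈ J)
    (hJ1 : ∀ j, j ∈ J → 1 ≤ j) {T : Set H}
    (hT : T ⊆ {g | ∃ i ∈ I, g = x i} ∪ {g | ∃ j ∈ J, g = z j})
    {g : H} (hg : g ∈ Subgroup.closure T) :
    ∃ n : ℕ, ∃ a b : ℕ → ℤ, (∀ i, a i ≠ 0 → i ∈ I ∧ i < n) ∧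
      (∀ j, b j ≠ 0 → j ∈ J ∧ 1 ≤ j ∧ j ≤ n) ∧ g = Pl x a n * Zp z b n := by
  let P : H → Prop := fun g => ∃ n : ℕ, ∃ a b : ℕ → ℤ, (∀ i, a i ≠ 0 → i ∈ I ∧ i < n) ∧
      (∀ j, b j ≠ 0 → j ∈ J ∧ 1 ≤ j ∧ j ≤ n) ∧ g = Pl x a n * Zp z b n
  let S : Subgroup H := {
    carrier := setOf P
    one_mem' := ⟨0, 0, 0, fun i hi => absurd rfl hi, fun j hj => absurd rfl hj, by simp⟩
    mul_mem' := by
      rintro g g' ⟨n, a, b, ha, hb, rfl⟩ ⟨n', a', b', ha', hb', rfl⟩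
      set m := max n n' with hm
      have ea : Pl x a m = Pl x a n := Pl_extend x (le_max_left _ _)
        (fun i hi => by by_contra h0; have := (ha i h0).2; omega)
      have ea' : Pl x a' m = Pl x a' n' := Pl_extend x (le_max_right _ _)
        (fun i hi => by by_contra h0; have := (ha' i h0).2; omega)
      have eb : Zp z b m = Zp z b n := Zp_extend z (le_max_left _ _)
        (fun j hj => by by_contra h0; have := (hb j h0).2.2; omega)
      have eb' : Zp z b' m = Zp z b' n' := Zp_extend z (le_max_right _ _)
        (fun j hj => by by_contra h0; have := (hb' j h0).2.2; omega)
      obtain ⟨c, hcsupp, hceq⟩ := Pl_mul x z hnil hrel hzc m a a'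
      refine ⟨m, a + a', c + (b + b'), ?_, ?_, ?_⟩
      · intro i hi
        have : a i ≠ 0 ∨ a' i ≠ 0 := by
          by_contra h0; push_neg at h0
          exact hi (by show a i + a' i = 0; rw [h0.1, h0.2]; ring)
        rcases this with h0 | h0
        · exact ⟨(ha i h0).1, by have := (ha i h0).2; omega⟩
        · exact ⟨(ha' i h0).1, by have := (ha' i h0).2; omega⟩
      · intro j hj
        have : c j ≠ 0 ∨ b j ≠ 0 ∨ b' j ≠ 0 := by
          by_contra h0; push_neg at h0
          exact hj (by show c j + (b j + b' j) = 0; rw [h0.1, h0.2.1, h0.2.2]; ring)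
        rcases this with h0 | h0 | h0
        · obtain ⟨hjm, haj, i, hij, hai⟩ := hcsupp j h0
          have hjI : j ∈ I := (ha j haj).1
          have hiI : i ∈ I := (ha' i hai).1
          have hjJ : j ∈ J := hIJ i j hiI hjI hij
          exact ⟨hjJ, hJ1 j hjJ, by omega⟩
        · obtain ⟨h1, h2, h3⟩ := hb j h0
          exact ⟨h1, h2, by omega⟩
        · obtain ⟨h1, h2, h3⟩ := hb' j h0
          exact ⟨h1, h2, by omega⟩
      · rw [← ea, ← ea', ← eb, ← eb']
        calc Pl x a m * Zp z b m * (Pl x a' m * Zp z b' m)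
            = Pl x a m * (Zp z b m * Pl x a' m) * Zp z b' m := by group
          _ = Pl x a m * (Pl x a' m * Zp z b m) * Zp z b' m := by
              rw [Zp_comm_all z hzc b m]
          _ = (Pl x a m * Pl x a' m) * (Zp z b m * Zp z b' m) := by group
          _ = Pl x (a + a') m * Zp z c m * Zp z (b + b') m := by
              rw [hceq, Zp_add z hzc]
          _ = Pl x (a + a') m * Zp z (c + (b + b')) m := by
              rw [mul_assoc, Zp_add z hzc]
    inv_mem' := by
      rintro g ⟨n, a, b, ha, hb, rfl⟩
      obtain ⟨c, hcsupp, hceq⟩ := Pl_mul x z hnil hrel hzc n a (-a)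
      have h1 : Pl x (a + -a) n = 1 := Pl_eq_one x n (fun i hi => by show a i + - a i = 0; ring)
      rw [h1, one_mul] at hceq
      have hinv : (Pl x a n)⁻¹ = Pl x (-a) n * Zp z (-c) n := by
        rw [← Zp_inv z hzc]
        have hone : Pl x a n * (Pl x (-a) n * (Zp z c n)⁻¹) = 1 := by
          rw [← mul_assoc, hceq]; group
        exact inv_eq_of_mul_eq_one_right hone
      refine ⟨n, -a, -c + -b, ?_, ?_, ?_⟩
      · intro i hi
        have : a i ≠ 0 := fun h0 => hi (by show -(a i) = 0; rw [h0]; ring)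
        exact ha i this
      · intro j hj
        have : c j ≠ 0 ∨ b j ≠ 0 := by
          by_contra h0; push_neg at h0
          exact hj (by show -(c j) + -(b j) = 0; rw [h0.1, h0.2]; ring)
        rcases this with h0 | h0
        · obtain ⟨hjn, haj, i, hij, hai⟩ := hcsupp j h0
          have hiI : i ∈ I := (ha i (fun hh => hai (by show -(a i) = 0; rw [hh]; ring))).1
          have hjJ : j ∈ J := hIJ i j hiI (ha j haj).1 hij
          exact ⟨hjJ, hJ1 j hjJ, by omega⟩
        · obtain ⟨h1', h2', h3'⟩ := hb j h0
          exact ⟨h1', h2', h3'⟩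
      · rw [mul_inv_rev, hinv, Zp_inv z hzc]
        calc Zp z (-b) n * (Pl x (-a) n * Zp z (-c) n)
            = (Zp z (-b) n * Pl x (-a) n) * Zp z (-c) n := by group
          _ = (Pl x (-a) n * Zp z (-b) n) * Zp z (-c) n := by
              rw [← Zp_comm_all z hzc (-b) n]
          _ = Pl x (-a) n * (Zp z (-b) n * Zp z (-c) n) := by group
          _ = Pl x (-a) n * Zp z (-c + -b) n := by
              rw [Zp_add z hzc]
              congr 1
              exact Zp_congr z n (fun j _ _ => by
                show -(b j) + -(c j) = -(c j) + -(b j); ring)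
  }
  have hle : Subgroup.closure T ≤ S := by
    rw [Subgroup.closure_le]
    intro t ht
    rcases hT ht with ⟨i, hiI, rfl⟩ | ⟨j, hjJ, rfl⟩
    · refine ⟨i+1, (fun j => if j = i then 1 else 0), 0, ?_, ?_, ?_⟩
      · intro j hj
        have hj2 : (if j = i then (1:ℤ) else 0) ≠ 0 := hj
        by_cases hji : j = i
        · subst hji; exact ⟨hiI, by omega⟩
        · rw [if_neg hji] at hj2; exact absurd rfl hj2
      · intro j hj; exact absurd rfl hj
      · show x i = Pl x (fun j => if j = i then 1 else 0) (i+1) * Zp z 0 (i+1)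
        rw [Pl_succ, Pl_eq_one x i (fun j hj => if_neg (by omega)),
          Zp_eq_one z (b := 0) (i+1) (fun j _ _ => rfl)]
        show x i = 1 * x i ^ (if i = i then (1:ℤ) else 0) * 1
        rw [if_pos rfl]
        group
    · have hj1 : 1 ≤ j := hJ1 j hjJ
      refine ⟨j, 0, (fun t => if t = j then 1 else 0), ?_, ?_, ?_⟩
      · intro i hi; exact absurd rfl hi
      · intro t ht
        have ht2 : (if t = j then (1:ℤ) else 0) ≠ 0 := ht
        by_cases htj : t = j
        · subst htj; exact ⟨hjJ, hj1, le_refl _⟩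
        · rw [if_neg htj] at ht2; exact absurd rfl ht2
      · rw [Pl_eq_one x (a := 0) j (fun i hi => rfl), Zp_single z hj1 1]
        group
  exact hle hg

end Comm


section PowOne

theorem Pl_one_of_dvd {p : ℕ} (x : ℕ → H) (hexp : ∀ g : H, g ^ p = 1) {a : ℕ → ℤ}
    (hdvd : ∀ i, (p:ℤ) ∣ a i) (m : ℕ) : Pl x a m = 1 := by
  induction m with
  | zero => simp
  | succ m ih =>
    rw [Pl_succ, ih]
    obtain ⟨qq, hqq⟩ := hdvd m
    rw [hqq, zpow_mul, zpow_natCast, hexp, one_zpow, mul_one]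

theorem Zp_one_of_dvd {p : ℕ} (z : ℕ → H) (hexp : ∀ g : H, g ^ p = 1) {b : ℕ → ℤ}
    (hdvd : ∀ j, (p:ℤ) ∣ b j) (m : ℕ) : Zp z b m = 1 := by
  induction m with
  | zero => simp
  | succ m ih =>
    rw [Zp_succ, ih]
    obtain ⟨qq, hqq⟩ := hdvd (m+1)
    rw [hqq, zpow_mul, zpow_natCast, hexp, one_zpow, mul_one]

end PowOne

section Fin

theorem finite_of_commGroup_gen {A : Type*} [CommGroup A] {q : ℕ} (hq : q.Prime)
    {ι : Type*} [Fintype ι] [DecidableEq ι] (v : ι → A)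
    (hgen : ∀ g : A, g ∈ Subgroup.closure (Set.range v)) (hpow : ∀ i, v i ^ q = 1) :
    Finite A := by
  haveI : NeZero q := ⟨hq.pos.ne'⟩
  haveI : Fact (1 < q) := ⟨hq.one_lt⟩
  have hmod : ∀ (g : A), g ^ q = 1 → ∀ m : ℕ, g ^ (m % q) = g ^ m := by
    intro g hg m
    conv_rhs => rw [← Nat.div_add_mod m q]
    rw [pow_add, pow_mul, hg, one_pow, one_mul]
  let μ : Multiplicative (ι → ZMod q) →* A := MonoidHom.mk'
    (fun c => ∏ i, v i ^ (Multiplicative.toAdd c i).val)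
    (by
      intro c d
      show (∏ i, v i ^ (Multiplicative.toAdd (c * d) i).val)
        = (∏ i, v i ^ (Multiplicative.toAdd c i).val)
          * ∏ i, v i ^ (Multiplicative.toAdd d i).val
      refine Eq.trans (Finset.prod_congr rfl ?_) Finset.prod_mul_distrib
      intro i _
      rw [← pow_add]
      have h1 : (Multiplicative.toAdd (c * d) i) =
          Multiplicative.toAdd c i + Multiplicative.toAdd d i := rfl
      rw [h1, ZMod.val_add]
      exact hmod _ (hpow i) _)
  have hsurj : Function.Surjective μ := by
    have hrange : Subgroup.closure (Set.range v) ≤ μ.range := by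
      rw [Subgroup.closure_le]
      rintro _ ⟨i, rfl⟩
      refine ⟨Multiplicative.ofAdd (Pi.single i 1), ?_⟩
      show ∏ j, v j ^ ((Pi.single i (1 : ZMod q) : ι → ZMod q) j).val = v i
      rw [Finset.prod_eq_single i
        (fun j _ hji => by rw [Pi.single_eq_of_ne hji, ZMod.val_zero, pow_zero])
        (fun hmem => absurd (Finset.mem_univ i) hmem)]
      rw [Pi.single_eq_same, ZMod.val_one, pow_one]
    intro g
    exact hrange (hgen g)
  exact Finite.of_surjective μ hsurj

theorem finite_closure {G : Type*} [Group G] {q : ℕ} (hq : q.Prime)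
    {ι : Type*} [Fintype ι] [DecidableEq ι] (u : ι → G)
    (hcomm : ∀ i j, u i * u j = u j * u i) (hpow : ∀ i, u i ^ q = 1) :
    Finite (Subgroup.closure (Set.range u)) := by
  letI : CommGroup (Subgroup.closure (Set.range u)) :=
    Subgroup.closureCommGroupOfComm (k := Set.range u)
      (by rintro _ ⟨i, rfl⟩ _ ⟨j, rfl⟩; exact hcomm i j)
  let u' : ι → Subgroup.closure (Set.range u) :=
    fun i => ⟨u i, Subgroup.subset_closure (Set.mem_range_self i)⟩
  apply finite_of_commGroup_gen hq u' ?_ ?_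
  · intro g
    have h1 : g ∈ (⊤ : Subgroup (Subgroup.closure (Set.range u))) := Subgroup.mem_top g
    rw [← Subgroup.closure_closure_coe_preimage (k := Set.range u)] at h1
    refine Subgroup.closure_mono ?_ h1
    rintro w hw
    obtain ⟨i, hi⟩ := hw
    exact ⟨i, Subtype.ext hi⟩
  · intro i
    exact Subtype.ext (by show (u i : G) ^ q = 1; exact hpow i)

theorem finite_of_class2 {G : Type*} [Group G] {q : ℕ} (hq : q.Prime)
    (hexp : ∀ g : G, g ^ q = 1)
    (hnil : ∀ a b : G, a⁻¹ * b⁻¹ * a * b ∈ Subgroup.center G)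
    {n : ℕ} (t : Fin n → G) (hgen : Subgroup.closure (Set.range t) = ⊤) :
    Finite G := by
  let u : Fin n × Fin n → G := fun ij => cmm (t ij.1) (t ij.2)
  have hucen : ∀ ij, u ij ∈ Subgroup.center G := fun ij => hnil _ _
  set C := Subgroup.closure (Set.range u) with hCdef
  haveI hCfin : Finite C := finite_closure hq u
    (fun i j => Subgroup.mem_center_iff.mp (hucen j) (u i))
    (fun ij => by
      have h1 : u ij ^ q = cmm (t ij.1 ^ q) (t ij.2) := by
        simpa [lhom] using ((lhom hnil (t ij.2)).map_pow (t ij.1) q).symm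
      rw [h1, hexp]
      exact cmm_one_left hnil _)
  have hCle : C ≤ Subgroup.center G := (Subgroup.closure_le _).mpr
    (by rintro _ ⟨ij, rfl⟩; exact hucen ij)
  haveI hCnormal : C.Normal := ⟨fun m hm g => by
    have h2 : g * m * g⁻¹ = m := by
      rw [Subgroup.mem_center_iff.mp (hCle hm) g]; group
    rw [h2]; exact hm⟩
  have hcommQ : ∀ i j : Fin n, ((QuotientGroup.mk (t i) : G ⧸ C)) * QuotientGroup.mk (t j)
      = QuotientGroup.mk (t j) * QuotientGroup.mk (t i) := by
    intro i j
    rw [← QuotientGroup.mk_mul, ← QuotientGroup.mk_mul]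
    apply (QuotientGroup.eq (s := C)).mpr
    have h3 : (t i * t j)⁻¹ * (t j * t i) = cmm (t j) (t i) := by unfold cmm; group
    rw [h3]
    exact Subgroup.subset_closure ⟨(j, i), rfl⟩
  have hpowQ : ∀ i : Fin n, ((QuotientGroup.mk (t i) : G ⧸ C)) ^ q = 1 := by
    intro i
    show ((QuotientGroup.mk' C) (t i)) ^ q = 1
    rw [← map_pow, hexp, map_one]
  have hQgen : Subgroup.closure (Set.range (fun i => (QuotientGroup.mk (t i) : G ⧸ C))) = ⊤ := by
    have hsur : Function.Surjective (QuotientGroup.mk' C) := QuotientGroup.mk'_surjective C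
    refine Eq.symm ?_
    calc (⊤ : Subgroup (G ⧸ C)) = Subgroup.map (QuotientGroup.mk' C) ⊤ :=
          (Subgroup.map_top_of_surjective _ hsur).symm
      _ = Subgroup.map (QuotientGroup.mk' C) (Subgroup.closure (Set.range t)) := by rw [hgen]
      _ = Subgroup.closure ((QuotientGroup.mk' C) '' Set.range t) := by
          rw [MonoidHom.map_closure]
      _ = Subgroup.closure (Set.range (fun i => (QuotientGroup.mk (t i) : G ⧸ C))) := by
          rw [← Set.range_comp]
          rfl
  haveI hQfin : Finite (G ⧸ C) := by
    have hfin := finite_closure hq (fun i : Fin n => (QuotientGroup.mk (t i) : G ⧸ C))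
      hcommQ hpowQ
    rw [hQgen] at hfin
    exact Finite.of_equiv _ Subgroup.topEquiv.toEquiv
  exact Finite.of_equiv _ (Subgroup.groupEquivQuotientProdSubgroup (s := C)).symm

end Fin

end Stmt10Aux

open Stmt10Aux in
/-- Let `H` be the group in the variety of exponent-`p`, class-2 nilpotent groups
(`p` an odd prime) with generators `x_i` (`i ∈ ℕ`) and `z_k` (`k ≥ 1`), subject to
`[x_i, x_k] = z_k` for `i < k`, where the `z_k` (`k ≥ 1`) are central and linearly
independent over `ℤ/pℤ`. Then `H` is residually a finite `p`-group: for every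
`h ≠ 1` there is a normal subgroup `N` of `H` with `h ∉ N` whose index is a power
of `p` (i.e. `H/N` is a finite `p`-group). -/
theorem stmt10 {p : ℕ} (hp : p.Prime) (hodd : Odd p) {H : Type*} [Group H]
    (hexp : ∀ g : H, g ^ p = 1)
    (hnil : ∀ a b : H, a⁻¹ * b⁻¹ * a * b ∈ Subgroup.center H)
    (x z : ℕ → H)
    (hrel : ∀ i k : ℕ, i < k → (x i)⁻¹ * (x k)⁻¹ * x i * x k = z k)
    (hzc : ∀ k : ℕ, 1 ≤ k → z k ∈ Subgroup.center H)
    (hgen : Subgroup.closure (Set.range x ∪ Set.range (fun k => z (k + 1))) = ⊤)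
    (hindep : ∀ (n : ℕ) (c : Fin n → ℤ),
      (List.ofFn fun k : Fin n => z (k + 1) ^ c k).prod = 1 →
      ∀ k : Fin n, (p : ℤ) ∣ c k)
    (h : H) (hne : h ≠ 1) :
    ∃ N : Subgroup H, N.Normal ∧ h ∉ N ∧ ∃ m : ℕ, N.index = p ^ m := by
  classical
  -- divisibility from independence
  have hdvd_of_Zp : ∀ (bb : ℕ → ℤ) (m : ℕ), Zp z bb m = 1 →
      ∀ j, 1 ≤ j → j ≤ m → (p:ℤ) ∣ bb j := by
    intro bb m hZ j h1 h2
    have h3 := hindep m (fun k => bb (k + 1)) hZ ⟨j - 1, by omega⟩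
    have h4 : (j - 1) + 1 = j := by omega
    simpa [h4] using h3
  -- normal form of h
  have hmem : h ∈ Subgroup.closure (Set.range x ∪ Set.range fun k => z (k + 1)) := by
    rw [hgen]; exact Subgroup.mem_top h
  obtain ⟨n₁, a, b, ha, hb, hform⟩ :=
    mem_XZ x z hnil hrel hzc (I := Set.univ) (J := Set.Ici 1)
      (fun i j _ _ hij => Set.mem_Ici.mpr (by omega))
      (fun j hj => hj)
      (by
        rintro g (⟨i, rfl⟩ | ⟨k, rfl⟩)
        · exact Or.inl ⟨i, Set.mem_univ i, rfl⟩
        · exact Or.inr ⟨k + 1, Set.mem_Ici.mpr (by omega), rfl⟩)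
      hmem
  set n := n₁ + 1 with hn
  set T2 : Set H := {g | ∃ i ∈ Set.Ici n, g = x i} ∪ {g | ∃ j ∈ Set.Ici n, g = z j} with hT2
  set N := Subgroup.closure T2 with hN
  -- commutators with x k, k ≥ n, land in N
  have hcommN : ∀ k, n ≤ k → ∀ g : H, cmm (x k) g ∈ N := by
    intro k hk
    have hle : (⊤ : Subgroup H) ≤ Subgroup.comap (rhom hnil (x k)) N := by
      rw [← hgen, Subgroup.closure_le]
      rintro w (⟨i, rfl⟩ | ⟨m, rfl⟩)
      · show cmm (x k) (x i) ∈ N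
        rcases lt_trichotomy i k with hik | hik | hik
        · rw [cmm_x_gt x z hrel hik]
          exact Subgroup.inv_mem _ (Subgroup.subset_closure (Or.inr ⟨k, hk, rfl⟩))
        · subst hik
          rw [cmm_eq_one _ _ rfl]
          exact Subgroup.one_mem _
        · rw [cmm_x_lt x z hrel hik]
          exact Subgroup.subset_closure (Or.inr ⟨i, Set.mem_Ici.mpr (by omega), rfl⟩)
      · show cmm (x k) (z (m + 1)) ∈ N
        rw [cmm_center_right _ _ (hzc (m + 1) (by omega))]
        exact Subgroup.one_mem _
    intro g
    exact Subgroup.mem_comap.mp (hle (Subgroup.mem_top g))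
  have hNnormal : N.Normal := by
    constructor
    intro m hm g
    have himg : Subgroup.map (MulAut.conj g).toMonoidHom N ≤ N := by
      rw [hN, MonoidHom.map_closure, Subgroup.closure_le]
      rintro w ⟨w', hw', rfl⟩
      rcases hw' with ⟨k, hk, rfl⟩ | ⟨j, hj, rfl⟩
      · have h5 : (MulAut.conj g).toMonoidHom (x k) = x k * cmm (x k) g⁻¹ := by
          show g * x k * g⁻¹ = x k * cmm (x k) g⁻¹
          unfold cmm; group
        rw [h5]
        exact Subgroup.mul_mem _ (Subgroup.subset_closure (Or.inl ⟨k, hk, rfl⟩))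
          (hcommN k hk g⁻¹)
      · have h5 : (MulAut.conj g).toMonoidHom (z j) = z j := by
          show g * z j * g⁻¹ = z j
          rw [Subgroup.mem_center_iff.mp (hzc j (by exact le_trans (by omega) hj)) g]
          group
        rw [h5]
        exact Subgroup.subset_closure (Or.inr ⟨j, hj, rfl⟩)
    exact himg ⟨m, hm, rfl⟩
  have hnotmem : h ∉ N := by
    intro hhN
    obtain ⟨n', a', b', ha', hb', hform'⟩ :=
      mem_XZ x z hnil hrel hzc (I := Set.Ici n) (J := Set.Ici n)
        (fun i j hi hj hij => Set.mem_Ici.mpr (le_trans (Set.mem_Ici.mp hi) hij.le))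
        (fun j hj => by have := Set.mem_Ici.mp hj; omega)
        (Set.Subset.rfl) hhN
    set M := max n₁ n' + 1 with hMdef
    -- support facts
    have hA : ∀ i, a i ≠ 0 → i < n₁ := fun i hi => (ha i hi).2
    have hA' : ∀ i, a' i ≠ 0 → n ≤ i ∧ i < n' := fun i hi =>
      ⟨Set.mem_Ici.mp (ha' i hi).1, (ha' i hi).2⟩
    have hB : ∀ j, b j ≠ 0 → 1 ≤ j ∧ j ≤ n₁ := fun j hj => ⟨(hb j hj).2.1, (hb j hj).2.2⟩
    have hB' : ∀ j, b' j ≠ 0 → n ≤ j ∧ j ≤ n' := fun j hj =>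
      ⟨Set.mem_Ici.mp (hb' j hj).1, (hb' j hj).2.2⟩
    -- extend to common length M
    have hPa : Pl x a M = Pl x a n₁ := Pl_extend x (by omega)
      (fun i hi => by by_contra h0; have := hA i h0; omega)
    have hPa' : Pl x a' M = Pl x a' n' := Pl_extend x (by omega)
      (fun i hi => by by_contra h0; have := (hA' i h0).2; omega)
    have hZb : Zp z b M = Zp z b n₁ := Zp_extend z (by omega)
      (fun j hj => by by_contra h0; have := (hB j h0).2; omega)
    have hZb' : Zp z b' M = Zp z b' n' := Zp_extend z (by omega)
      (fun j hj => by by_contra h0; have := (hB' j h0).2; omega)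
    have heq2 : Pl x a M * Zp z b M = Pl x a' M * Zp z b' M := by
      rw [hPa, hPa', hZb, hZb', ← hform, ← hform']
    -- the central element W = Pl e M
    set e : ℕ → ℤ := -a' + a with he
    obtain ⟨c₂, hc₂supp, hc₂eq⟩ := Pl_mul x z hnil hrel hzc M (-a') a'
    obtain ⟨c₁, hc₁supp, hc₁eq⟩ := Pl_mul x z hnil hrel hzc M (-a') a
    have hzero : Pl x (-a' + a') M = 1 := Pl_eq_one x M (fun i _ => by
      show -(a' i) + a' i = 0; ring)
    rw [hzero, one_mul] at hc₂eq
    have l1 : Pl x (-a') M * (Pl x a M * Zp z b M) = Pl x e M * Zp z (c₁ + b) M := by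
      rw [← mul_assoc, hc₁eq, mul_assoc, Zp_add z hzc]
    have l2 : Pl x (-a') M * (Pl x a' M * Zp z b' M) = Zp z (c₂ + b') M := by
      rw [← mul_assoc, hc₂eq, Zp_add z hzc]
    have l3 : Pl x e M * Zp z (c₁ + b) M = Zp z (c₂ + b') M := by
      rw [← l1, heq2, l2]
    have hW : Pl x e M = Zp z ((c₂ + b') + -(c₁ + b)) M := by
      have h6 : Pl x e M = Zp z (c₂ + b') M * (Zp z (c₁ + b) M)⁻¹ :=
        eq_mul_inv_of_mul_eq l3
      rw [h6, Zp_inv z hzc, Zp_add z hzc]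
    have hWc : Pl x e M ∈ Subgroup.center H := by
      rw [hW]; exact Zp_center z hzc _ _
    -- support of e
    have hE0 : ∀ i, max n₁ n' < i → e i = 0 := by
      intro i hi
      have h7 : a i = 0 := by by_contra h0; have := hA i h0; omega
      have h8 : a' i = 0 := by by_contra h0; have := (hA' i h0).2; omega
      show -(a' i) + a i = 0
      rw [h7, h8]; ring
    -- top commutator: p divides the sum of e
    have h11 : z M ^ (∑ i ∈ Finset.range M, e i) = 1 := by
      rw [← Ctop x z hnil hrel e (le_refl M)]
      exact cmm_center_left _ _ hWc
    have h12 : Zp z (fun j => if j = M then (∑ i ∈ Finset.range M, e i) else 0) M = 1 := by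
      rw [Zp_single z (by omega)]
      exact h11
    have h13 : (p:ℤ) ∣ ∑ i ∈ Finset.range M, e i := by
      have := hdvd_of_Zp _ M h12 M (by omega) (le_refl M)
      simpa using this
    -- bottom commutator: p divides e j for j ≥ 1
    have h14 : Zp z (fun j => -(e j)) (max n₁ n') = 1 := by
      rw [← Cbot x z hnil hrel e (max n₁ n')]
      exact cmm_center_left _ _ hWc
    have hdvd_e : ∀ i, (p:ℤ) ∣ e i := by
      have hpos : ∀ i, 1 ≤ i → (p:ℤ) ∣ e i := by
        intro i hi
        by_cases hle : i ≤ max n₁ n'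
        · have := hdvd_of_Zp _ (max n₁ n') h14 i hi hle
          exact (dvd_neg.mp this)
        · rw [hE0 i (by omega)]
          exact dvd_zero _
      intro i
      rcases Nat.eq_zero_or_pos i with h0 | h0
      · subst h0
        have hsum : e 0 = (∑ i ∈ Finset.range M, e i)
            - ∑ i ∈ Finset.range (max n₁ n'), e (i + 1) := by
          rw [hMdef, Finset.sum_range_succ']
          ring
        rw [hsum]
        exact dvd_sub h13 (Finset.dvd_sum (fun i _ => hpos (i+1) (by omega)))
      · exact hpos i h0
    -- split into a and a'
    have hdvd_a : ∀ i, (p:ℤ) ∣ a i := by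
      intro i
      by_cases h0 : a i = 0
      · rw [h0]; exact dvd_zero _
      · have hlt := hA i h0
        have h8 : a' i = 0 := by
          by_contra h9; have := (hA' i h9).1; omega
        have : e i = a i := by show -(a' i) + a i = a i; rw [h8]; ring
        rw [← this]; exact hdvd_e i
    have hdvd_a' : ∀ i, (p:ℤ) ∣ a' i := by
      intro i
      by_cases h0 : a' i = 0
      · rw [h0]; exact dvd_zero _
      · have hge := (hA' i h0).1
        have h8 : a i = 0 := by
          by_contra h9; have := hA i h9; omega
        have : e i = -(a' i) := by show -(a' i) + a i = -(a' i); rw [h8]; ring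
        have h10 : (p:ℤ) ∣ -(a' i) := by rw [← this]; exact hdvd_e i
        exact dvd_neg.mp h10
    -- conclude h is a product of z's in two ways
    have hh1 : h = Zp z b M := by
      rw [hform, ← hPa, ← hZb, Pl_one_of_dvd x hexp hdvd_a M, one_mul]
    have hh2 : h = Zp z b' M := by
      rw [hform', ← hPa', ← hZb', Pl_one_of_dvd x hexp hdvd_a' M, one_mul]
    have h20 : Zp z (b + -b') M = 1 := by
      rw [← Zp_add z hzc, ← Zp_inv z hzc, ← hh1, ← hh2]
      group
    have hdvd_b : ∀ j, (p:ℤ) ∣ b j := by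
      intro j
      by_cases h0 : b j = 0
      · rw [h0]; exact dvd_zero _
      · obtain ⟨hj1, hj2⟩ := hB j h0
        have h8 : b' j = 0 := by
          by_contra h9; have := (hB' j h9).1; omega
        have h21 := hdvd_of_Zp _ M h20 j hj1 (by omega)
        have h22 : (b + -b') j = b j := by show b j + -(b' j) = b j; rw [h8]; ring
        rwa [h22] at h21
    apply hne
    rw [hh1]
    exact Zp_one_of_dvd z hexp hdvd_b M
  refine ⟨N, hNnormal, hnotmem, ?_⟩
  haveI := hNnormal
  have hexpQ : ∀ q : H ⧸ N, q ^ p = 1 := by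
    intro q
    obtain ⟨g, rfl⟩ := QuotientGroup.mk'_surjective N q
    rw [← map_pow, hexp, map_one]
  have hnilQ : ∀ A B : H ⧸ N, A⁻¹ * B⁻¹ * A * B ∈ Subgroup.center (H ⧸ N) := by
    intro A B
    obtain ⟨g, rfl⟩ := QuotientGroup.mk'_surjective N A
    obtain ⟨w, rfl⟩ := QuotientGroup.mk'_surjective N B
    rw [Subgroup.mem_center_iff]
    intro q
    obtain ⟨v, rfl⟩ := QuotientGroup.mk'_surjective N q
    show QuotientGroup.mk (v * (g⁻¹ * w⁻¹ * g * w)) = QuotientGroup.mk ((g⁻¹ * w⁻¹ * g * w) * v)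
    exact congrArg _ (Subgroup.mem_center_iff.mp (hnil g w) v)
  let t : Fin n → H ⧸ N := fun i => QuotientGroup.mk (x i)
  have htgen : Subgroup.closure (Set.range t) = ⊤ := by
    rw [eq_top_iff]
    have h30 : (⊤ : Subgroup (H ⧸ N)) = Subgroup.closure
        ((QuotientGroup.mk' N) '' (Set.range x ∪ Set.range fun k => z (k + 1))) := by
      rw [← MonoidHom.map_closure, hgen,
        Subgroup.map_top_of_surjective _ (QuotientGroup.mk'_surjective N)]
    rw [h30, Subgroup.closure_le]
    rintro w ⟨w', hw', rfl⟩
    rcases hw' with ⟨i, rfl⟩ | ⟨k, rfl⟩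
    · by_cases hi : i < n
      · exact Subgroup.subset_closure ⟨⟨i, hi⟩, rfl⟩
      · have h31 : (QuotientGroup.mk' N) (x i) = 1 :=
          (QuotientGroup.eq_one_iff _).mpr
            (Subgroup.subset_closure (Or.inl ⟨i, Set.mem_Ici.mpr (by omega), rfl⟩))
        rw [h31]
        exact Subgroup.one_mem _
    · by_cases hk : k + 1 < n
      · have hz : z (k + 1) = (x 0)⁻¹ * (x (k + 1))⁻¹ * x 0 * x (k + 1) :=
          (hrel 0 (k + 1) (by omega)).symm
        have ht0 : (QuotientGroup.mk' N) (x 0) ∈ Subgroup.closure (Set.range t) :=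
          Subgroup.subset_closure ⟨⟨0, by omega⟩, rfl⟩
        have htk : (QuotientGroup.mk' N) (x (k + 1)) ∈ Subgroup.closure (Set.range t) :=
          Subgroup.subset_closure ⟨⟨k + 1, hk⟩, rfl⟩
        show (QuotientGroup.mk' N) (z (k + 1)) ∈ Subgroup.closure (Set.range t)
        rw [hz, map_mul, map_mul, map_mul, map_inv, map_inv]
        exact Subgroup.mul_mem _ (Subgroup.mul_mem _ (Subgroup.mul_mem _
          (Subgroup.inv_mem _ ht0) (Subgroup.inv_mem _ htk)) ht0) htk
      · have h31 : (QuotientGroup.mk' N) (z (k + 1)) = 1 :=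
          (QuotientGroup.eq_one_iff _).mpr
            (Subgroup.subset_closure (Or.inr ⟨k + 1, Set.mem_Ici.mpr (by omega), rfl⟩))
        rw [h31]
        exact Subgroup.one_mem _
  haveI hfinQ : Finite (H ⧸ N) := finite_of_class2 hp hexpQ hnilQ t htgen
  haveI : Fact p.Prime := ⟨hp⟩
  have hPG : IsPGroup p (H ⧸ N) := fun q => ⟨1, by rw [pow_one]; exact hexpQ q⟩
  obtain ⟨m, hm⟩ := IsPGroup.iff_card.mp hPG
  exact ⟨m, by rw [Subgroup.index_eq_card]; exact hm⟩
end

section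
/- Let H be as above (generators x_i, central generators z_k with [x_i,x_k] = z_k for i < k, z_k linearly independent). Then H is directly indecomposable: if H = A × B then A = {1} or B = {1}. -/
/-!
Since `H` has class 2, the commutator `κ g h = g⁻¹ h⁻¹ g h` is a bilinear alternating pairing
with values in the centre. Modulo commutators every element is a product of powers of the `x i`,
and the independence of the `z k` lets one read the exponents off the commutators with the `x k`:
an element commuting with `x m` has commutator `z k ^ λ` with every `x k`, `k > m`, for a single
`λ`, and an element commuting with every `x k` is a product of commutators.

Split `x m = a m * b m` along `H = A × B`. For `m < k`, `κ (a m) (x k) = z k ^ λ m` lies in `A`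
and `κ (b m) (x k) = z k ^ (1 - λ m)` lies in `B`, so `z k ^ (λ m' * (1 - λ m)) ∈ A ⊓ B = 1` and
`p ∣ λ m' * (1 - λ m)`: either every `λ m` is `0` or every `λ m` is `1` modulo `p`. In the first
case every `a m` commutes with every `x k`, so it is a product of commutators; all commutators lie
in `B`, hence `a m = 1`, `B = H` and `A = 1`. The second case is symmetric.
-/

open Subgroup
open scoped IsMulCommutative

section ClassTwo

variable {G : Type*} [Group G] (hG : ∀ a b : G, a⁻¹ * b⁻¹ * a * b ∈ center G)

def centralCommutator (g h : G) : center G := ⟨g⁻¹ * h⁻¹ * g * h, hG g h⟩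

local notation "κ" => centralCommutator hG

variable {hG}

@[simp] lemma coe_centralCommutator (g h : G) : (κ g h : G) = g⁻¹ * h⁻¹ * g * h := rfl

lemma centralCommutator_eq_one_iff {g h : G} : κ g h = 1 ↔ g * h = h * g := by
  rw [← Subtype.coe_inj, coe_centralCommutator, OneMemClass.coe_one,
    show g⁻¹ * h⁻¹ * g * h = (h * g)⁻¹ * (g * h) by group, inv_mul_eq_one, eq_comm]

lemma centralCommutator_self (g : G) : κ g g = 1 :=
  centralCommutator_eq_one_iff.mpr rfl

lemma centralCommutator_inv (g h : G) : (κ g h)⁻¹ = κ h g :=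
  Subtype.ext (by simp only [coe_inv, coe_centralCommutator]; group)

lemma centralCommutator_mul_right (g h k : G) : κ g (h * k) = κ g h * κ g k := by
  have hc := mem_center_iff.mp (hG g h)
  apply Subtype.ext
  simp only [coe_mul, coe_centralCommutator]
  calc g⁻¹ * (h * k)⁻¹ * g * (h * k)
      = g⁻¹ * k⁻¹ * g * ((g⁻¹ * h⁻¹ * g * h) * k) := by group
    _ = g⁻¹ * k⁻¹ * g * (k * (g⁻¹ * h⁻¹ * g * h)) := by rw [hc k]
    _ = (g⁻¹ * k⁻¹ * g * k) * (g⁻¹ * h⁻¹ * g * h) := by group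
    _ = (g⁻¹ * h⁻¹ * g * h) * (g⁻¹ * k⁻¹ * g * k) := hc _

lemma centralCommutator_mul_left (g k h : G) : κ (g * k) h = κ g h * κ k h := by
  rw [← centralCommutator_inv, centralCommutator_mul_right, mul_inv, centralCommutator_inv,
    centralCommutator_inv, mul_comm]

variable (hG) in
def centralCommutatorLeft (h : G) : G →* center G :=
  MonoidHom.mk' (κ · h) fun g k => centralCommutator_mul_left g k h

variable (hG) in
def centralCommutatorRight (g : G) : G →* center G :=
  MonoidHom.mk' (κ g ·) (centralCommutator_mul_right g)

lemma centralCommutator_mem {K : Subgroup G} {g h : G} (hg : g ∈ K) (hh : h ∈ K) :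
    (κ g h : G) ∈ K :=
  mul_mem (mul_mem (mul_mem (inv_mem hg) (inv_mem hh)) hg) hh

lemma centralCommutator_mul_right_of_commute {g h k : G} (hgk : g * k = k * g) :
    κ g (h * k) = κ g h := by
  rw [centralCommutator_mul_right, centralCommutator_eq_one_iff.mpr hgk, mul_one]

lemma centralCommutator_mul_left_of_commute {g h k : G} (hgh : g * h = h * g) :
    κ g (h * k) = κ g k := by
  rw [centralCommutator_mul_right, centralCommutator_eq_one_iff.mpr hgh, one_mul]

variable (hG) in
lemma commutator_le_of_closure_eq_top {S : Set G} (hS : closure S = ⊤) {K : Subgroup G}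
    (hK : ∀ s ∈ S, ∀ t ∈ S, (κ s t : G) ∈ K) : commutator G ≤ K := by
  have extend : ∀ g, (∀ t ∈ S, (κ g t : G) ∈ K) → ∀ h, (κ g h : G) ∈ K := fun g hg h =>
    (closure_le (K.comap ((center G).subtype.comp (centralCommutatorRight hG g)))).mpr hg
      (hS ▸ mem_top h)
  have hall : ∀ g h, (κ g h : G) ∈ K := fun g => extend g fun t ht => by
    rw [← centralCommutator_inv, coe_inv]
    exact inv_mem (extend t (hK t ht) g)
  rw [_root_.commutator_def, commutator_le]
  intro g _ h _
  simpa [commutatorElement_def, mul_assoc] using hall g⁻¹ h⁻¹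

lemma zpow_eq_one_of_dvd {p : ℕ} {g : G} (hg : g ^ p = 1) {n : ℤ} (hn : (p : ℤ) ∣ n) :
    g ^ n = 1 :=
  orderOf_dvd_iff_zpow_eq_one.mp
    ((Int.natCast_dvd_natCast.mpr (orderOf_dvd_of_pow_eq_one hg)).trans hn)

lemma center_pow_eq_one {p : ℕ} (hexp : ∀ g : G, g ^ p = 1) (u : center G) : u ^ p = 1 :=
  Subtype.ext (by simp [hexp])

lemma Finset.prod_zpow_eq_zpow_sum {M ι : Type*} [CommGroup M] (s : Finset ι) (f : ι → ℤ)
    (a : M) :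
    ∏ i ∈ s, a ^ f i = a ^ ∑ i ∈ s, f i := by
  induction s using Finset.cons_induction with
  | empty => simp
  | cons i s hi ih => rw [Finset.prod_cons, Finset.sum_cons, ih, zpow_add]

section Abelianization

open Abelianization

variable {ι : Type*} {y : ι → G}

lemma exists_finsupp_of_closure_range_eq_top (hy : closure (Set.range y) = ⊤) (g : G) :
    ∃ c : ι →₀ ℤ, of g = c.prod fun i e => of (y i) ^ e := by
  have hg : of g ∈ closure (Set.range (of ∘ y)) := by
    rw [Set.range_comp, ← MonoidHom.map_closure, hy]
    exact mem_map_of_mem _ (mem_top g)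
  exact mem_closure_range_iff.mp hg

lemma centralCommutator_eq_finsupp_prod {g : G} {c : ι →₀ ℤ}
    (hc : of g = c.prod fun i e => of (y i) ^ e) (h : G) :
    κ g h = c.prod fun i e => κ (y i) h ^ e := by
  simpa [map_finsuppProd, lift_apply_of, centralCommutatorLeft] using
    congrArg (lift (centralCommutatorLeft hG h)) hc

lemma mem_commutator_of_dvd {p : ℕ} (hexp : ∀ g : G, g ^ p = 1) {g : G} {c : ι →₀ ℤ}
    (hc : of g = c.prod fun i e => of (y i) ^ e) (hdvd : ∀ i, (p : ℤ) ∣ c i) :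
    g ∈ commutator G := by
  rw [← ker_of, MonoidHom.mem_ker, hc]
  exact Finset.prod_eq_one fun i _ =>
    zpow_eq_one_of_dvd (by rw [← map_pow, hexp, map_one]) (hdvd i)

end Abelianization

end ClassTwo

section Generators

variable {p : ℕ} {H : Type*} [Group H] {hnil : ∀ a b : H, a⁻¹ * b⁻¹ * a * b ∈ center H}
  {x z : ℕ → H}

local notation "κ" => centralCommutator hnil

-- `z k` realised in the centre as `[x 0, x k]`: this is `z k` for `k ≥ 1` and `1` for `k = 0`.
variable (hnil x) in
def centralGenerator (k : ℕ) : center H := κ (x 0) (x k)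

local notation "ζ" => centralGenerator hnil x

lemma closure_range_eq_top (hrel : ∀ i k : ℕ, i < k → (x i)⁻¹ * (x k)⁻¹ * x i * x k = z k)
    (hgen : closure (Set.range x ∪ Set.range (fun k => z (k + 1))) = ⊤) :
    closure (Set.range x) = ⊤ := by
  refine eq_top_iff.mpr (hgen ▸ closure_le _ |>.mpr (Set.union_subset subset_closure ?_))
  rintro _ ⟨k, rfl⟩
  have hx : ∀ i, x i ∈ closure (Set.range x) := fun i => subset_closure ⟨i, rfl⟩
  show z (k + 1) ∈ closure (Set.range x)
  rw [← hrel 0 (k + 1) k.succ_pos]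
  exact mul_mem (mul_mem (mul_mem (inv_mem (hx _)) (inv_mem (hx _))) (hx _)) (hx _)

section Relations

variable (hrel : ∀ i k : ℕ, i < k → (x i)⁻¹ * (x k)⁻¹ * x i * x k = z k)
include hrel

lemma coe_centralGenerator {k : ℕ} (hk : 1 ≤ k) : (ζ k : H) = z k :=
  hrel 0 k hk

lemma centralCommutator_x_x_of_lt {i k : ℕ} (hik : i < k) : κ (x i) (x k) = ζ k :=
  Subtype.ext ((hrel i k hik).trans (hrel 0 k (by omega)).symm)

lemma centralCommutator_x_x_zpow (i k : ℕ) (e : ℤ) :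
    κ (x i) (x k) ^ e = ζ k ^ (if i < k then e else 0) * (if k < i then ζ i ^ (-e) else 1) := by
  rcases lt_trichotomy i k with h | rfl | h
  · simp [h, h.not_gt, centralCommutator_x_x_of_lt hrel h]
  · simp [centralCommutator_self]
  · rw [← centralCommutator_inv, centralCommutator_x_x_of_lt hrel h]
    simp [h, h.not_gt, zpow_neg]

open Abelianization in
lemma centralCommutator_eq_of_coords {h : H} {c : ℕ →₀ ℤ}
    (hc : of h = c.prod fun i e => of (x i) ^ e) (k : ℕ) :
    κ h (x k) = ζ k ^ (∑ i ∈ Finset.range k, c i) * ∏ j ∈ c.support with k < j, ζ j ^ (-c j) := by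
  rw [centralCommutator_eq_finsupp_prod hc, Finsupp.prod]
  simp_rw [centralCommutator_x_x_zpow hrel]
  rw [Finset.prod_mul_distrib, Finset.prod_zpow_eq_zpow_sum, ← Finset.prod_filter,
    ← Finset.sum_filter]
  congr 2
  refine Finset.sum_subset (fun i hi => by simpa using (Finset.mem_filter.mp hi).2) ?_
  intro i hi hi'
  simp_all

lemma centralCommutator_right_factor {a b : H} {m k : ℕ} (hab : a * b = x m) (hmk : m < k)
    {l : ℤ} (hl : κ a (x k) = ζ k ^ l) : κ b (x k) = ζ k ^ (1 - l) := by
  have h := centralCommutator_mul_left (hG := hnil) a b (x k)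
  rw [hab, centralCommutator_x_x_of_lt hrel hmk, hl] at h
  rw [eq_inv_mul_of_mul_eq h.symm, sub_eq_neg_add, zpow_add, zpow_neg, zpow_one]

section Independence

variable (hindep : ∀ (n : ℕ) (c : Fin n → ℤ),
  (List.ofFn fun k : Fin n => z (k + 1) ^ c k).prod = 1 → ∀ k : Fin n, (p : ℤ) ∣ c k)
include hindep

lemma dvd_of_prod_centralGenerator_eq_one {s : Finset ℕ} {e : ℕ → ℤ}
    (h : ∏ j ∈ s, ζ j ^ e j = 1) {j : ℕ} (hjs : j ∈ s) (hj : 1 ≤ j) : (p : ℤ) ∣ e j := by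
  classical
  obtain ⟨n, hn⟩ := s.exists_nat_subset_range
  set e' : ℕ → ℤ := fun j => if j ∈ s then e j else 0
  have hprod : ∏ k ∈ Finset.range n, ζ (k + 1) ^ e' (k + 1) = 1 := by
    have hs : ∏ j ∈ s, ζ j ^ e' j = ∏ j ∈ Finset.range (n + 1), ζ j ^ e' j :=
      Finset.prod_subset (hn.trans (Finset.range_subset_range.mpr n.le_succ))
        fun j _ hj => by simp [e', hj]
    have h0 : ζ 0 ^ e' 0 = 1 := by rw [centralGenerator, centralCommutator_self, one_zpow]
    calc ∏ k ∈ Finset.range n, ζ (k + 1) ^ e' (k + 1)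
        = (∏ k ∈ Finset.range n, ζ (k + 1) ^ e' (k + 1)) * ζ 0 ^ e' 0 := by rw [h0, mul_one]
      _ = ∏ j ∈ s, ζ j ^ e' j := by rw [hs, Finset.prod_range_succ']
      _ = 1 := by rw [← h]; exact Finset.prod_congr rfl fun j hj => by simp [e', hj]
  have hlist : (List.ofFn fun k : Fin n => z (k + 1) ^ e' (k + 1)).prod = 1 := by
    have hcoe : (fun k : Fin n => z (k + 1) ^ e' (k + 1)) =
        (center H).subtype ∘ fun k : Fin n => ζ (k + 1) ^ e' (k + 1) := by
      ext k
      simp [coe_centralGenerator hrel (Nat.succ_pos k)]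
    rw [hcoe, ← List.map_ofFn, ← map_list_prod, List.prod_ofFn,
      Fin.prod_univ_eq_prod_range (fun k => ζ (k + 1) ^ e' (k + 1)), hprod, map_one]
  have hjn : j - 1 < n := by have := Finset.mem_range.mp (hn hjs); omega
  simpa [e', Nat.sub_add_cancel hj, hjs] using hindep n _ hlist ⟨j - 1, hjn⟩

lemma dvd_of_centralGenerator_zpow_eq_one {k : ℕ} (hk : 1 ≤ k) {e : ℤ} (h : ζ k ^ e = 1) :
    (p : ℤ) ∣ e :=
  dvd_of_prod_centralGenerator_eq_one hrel hindep (s := {k}) (e := fun _ => e)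
    (by rwa [Finset.prod_singleton]) (Finset.mem_singleton_self k) hk

open Abelianization in
lemma dvd_of_centralCommutator_eq_one {h : H} {c : ℕ →₀ ℤ}
    (hc : of h = c.prod fun i e => of (x i) ^ e) {m : ℕ} (h1 : κ h (x m) = 1) :
    (p : ℤ) ∣ ∑ i ∈ Finset.range m, c i ∧ ∀ j, m < j → (p : ℤ) ∣ c j := by
  classical
  set T := {j ∈ c.support | m < j}
  set e := Function.update (fun j => -c j) m (∑ i ∈ Finset.range m, c i)
  have he_m : e m = ∑ i ∈ Finset.range m, c i := Function.update_self _ _ _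
  have he_ne : ∀ j, j ≠ m → e j = -c j := fun j hj => Function.update_of_ne hj _ _
  have hprod : ∏ j ∈ insert m T, ζ j ^ e j = 1 := by
    rw [Finset.prod_insert (by simp [T]), he_m, ← h1,
      centralCommutator_eq_of_coords hrel hc]
    exact congrArg _ (Finset.prod_congr rfl fun j hj => by
      rw [he_ne j (Finset.mem_filter.mp hj).2.ne'])
  refine ⟨?_, fun j hj => ?_⟩
  · rcases Nat.eq_zero_or_pos m with rfl | hm
    · simp
    · simpa [he_m] using dvd_of_prod_centralGenerator_eq_one hrel hindep hprod
        (Finset.mem_insert_self m T) hm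
  · by_cases hcj : c j = 0
    · simp [hcj]
    · have hjT : j ∈ insert m T := Finset.mem_insert_of_mem (by simp [T, hcj, hj])
      simpa [he_ne j hj.ne'] using
        dvd_of_prod_centralGenerator_eq_one hrel hindep hprod hjT (by omega)

lemma dvd_mul_one_sub_of_inf_eq_bot {A B : Subgroup H} (hAB : A ⊓ B = ⊥)
    (hcomm : ∀ a ∈ A, ∀ b ∈ B, a * b = b * a) {a b : ℕ → H} (ha : ∀ m, a m ∈ A)
    (hb : ∀ m, b m ∈ B) (hab : ∀ m, a m * b m = x m) {l : ℕ → ℤ}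
    (hl : ∀ m k, m < k → κ (a m) (x k) = ζ k ^ l m) (m m' : ℕ) :
    (p : ℤ) ∣ l m' * (1 - l m) := by
  set k := max m m' + 1
  have hA : ((ζ k ^ l m' : center H) : H) ∈ A := by
    rw [← hl m' k (by omega), ← hab k,
      centralCommutator_mul_right_of_commute (hcomm _ (ha m') _ (hb k))]
    exact centralCommutator_mem (ha m') (ha k)
  have hB : ((ζ k ^ (1 - l m) : center H) : H) ∈ B := by
    rw [← centralCommutator_right_factor hrel (hab m) (by omega) (hl m k (by omega)), ← hab k,
      centralCommutator_mul_left_of_commute (hcomm _ (ha k) _ (hb m)).symm]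
    exact centralCommutator_mem (hb m) (hb k)
  have hAB' : ((ζ k ^ (l m' * (1 - l m)) : center H) : H) ∈ A ⊓ B := by
    refine ⟨?_, ?_⟩
    · rw [zpow_mul, coe_zpow]; exact zpow_mem hA _
    · rw [mul_comm, zpow_mul, coe_zpow]; exact zpow_mem hB _
  rw [hAB, mem_bot, OneMemClass.coe_eq_one] at hAB'
  exact dvd_of_centralGenerator_zpow_eq_one hrel hindep (by omega) hAB'

variable (hexp : ∀ g : H, g ^ p = 1) (hx : closure (Set.range x) = ⊤)
include hexp hx

lemma exists_centralCommutator_eq_zpow {h : H} {m : ℕ} (h1 : κ h (x m) = 1) :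
    ∃ l : ℤ, ∀ k, m < k → κ h (x k) = ζ k ^ l := by
  obtain ⟨c, hc⟩ := exists_finsupp_of_closure_range_eq_top hx h
  obtain ⟨hsum, htail⟩ := dvd_of_centralCommutator_eq_one hrel hindep hc h1
  refine ⟨c m, fun k hk => ?_⟩
  have hvanish : ∏ j ∈ c.support with k < j, ζ j ^ (-c j) = 1 :=
    Finset.prod_eq_one fun j hj =>
      zpow_eq_one_of_dvd (center_pow_eq_one hexp _)
        (dvd_neg.mpr (htail j (hk.trans (Finset.mem_filter.mp hj).2)))
  have hcong : (p : ℤ) ∣ ∑ i ∈ Finset.range k, c i - c m := by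
    rw [← Finset.sum_range_add_sum_Ico _ hk, Finset.sum_range_succ, add_sub_right_comm,
      add_sub_cancel_right]
    exact dvd_add hsum (Finset.dvd_sum fun i hi => htail i (Finset.mem_Ico.mp hi).1)
  rw [centralCommutator_eq_of_coords hrel hc, hvanish, mul_one,
    ← sub_add_cancel (∑ i ∈ Finset.range k, c i) (c m), zpow_add,
    zpow_eq_one_of_dvd (center_pow_eq_one hexp _) hcong, one_mul]

lemma mem_commutator_of_forall_centralCommutator_eq_one {h : H} (h1 : ∀ k, κ h (x k) = 1) :
    h ∈ commutator H := by
  obtain ⟨c, hc⟩ := exists_finsupp_of_closure_range_eq_top hx h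
  have hpos := (dvd_of_centralCommutator_eq_one hrel hindep hc (h1 0)).2
  have hzero := (dvd_of_centralCommutator_eq_one hrel hindep hc (h1 1)).1
  refine mem_commutator_of_dvd hexp hc fun i => ?_
  rcases i with _ | i
  · simpa using hzero
  · exact hpos _ i.succ_pos

lemma eq_bot_of_centralCommutator_eq_one {A B : Subgroup H} (hAB : A ⊓ B = ⊥)
    (hcomm : ∀ a ∈ A, ∀ b ∈ B, a * b = b * a) {a b : ℕ → H} (ha : ∀ m, a m ∈ A)
    (hb : ∀ m, b m ∈ B) (hab : ∀ m, a m * b m = x m)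
    (hA : ∀ m k, m < k → κ (a m) (x k) = 1) : A = ⊥ := by
  have hfactor : ∀ m k, κ (a m) (x k) = κ (a m) (a k) := fun m k => by
    rw [← hab k, centralCommutator_mul_right_of_commute (hcomm _ (ha m) _ (hb k))]
  have hall : ∀ m k, κ (a m) (x k) = 1 := by
    intro m k
    rcases lt_trichotomy m k with h | rfl | h
    · exact hA m k h
    · rw [hfactor, centralCommutator_self]
    · rw [hfactor, ← centralCommutator_inv, ← hfactor, hA k m h, inv_one]
  have hcomB : commutator H ≤ B := by
    refine commutator_le_of_closure_eq_top hnil hx ?_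
    rintro _ ⟨i, rfl⟩ _ ⟨k, rfl⟩
    rw [← hab i, centralCommutator_mul_left, hall, one_mul, ← hab k,
      centralCommutator_mul_left_of_commute (hcomm _ (ha k) _ (hb i)).symm]
    exact centralCommutator_mem (hb i) (hb k)
  have ha1 : ∀ m, a m = 1 := fun m => by
    have hmem : a m ∈ A ⊓ B := ⟨ha m,
      hcomB (mem_commutator_of_forall_centralCommutator_eq_one hrel hindep hexp hx (hall m))⟩
    rwa [hAB, mem_bot] at hmem
  have hBtop : B = ⊤ := by
    refine eq_top_iff.mpr (hx ▸ (closure_le B).mpr ?_)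
    rintro _ ⟨m, rfl⟩
    rw [← hab m, ha1, one_mul]
    exact hb m
  rwa [hBtop, inf_top_eq] at hAB

end Independence

end Relations

end Generators

theorem stmt11_general {p : ℕ} (hp : p.Prime) {H : Type*} [Group H]
    (hexp : ∀ g : H, g ^ p = 1)
    (hnil : ∀ a b : H, a⁻¹ * b⁻¹ * a * b ∈ Subgroup.center H)
    (x z : ℕ → H)
    (hrel : ∀ i k : ℕ, i < k → (x i)⁻¹ * (x k)⁻¹ * x i * x k = z k)
    (hgen : Subgroup.closure (Set.range x ∪ Set.range (fun k => z (k + 1))) = ⊤)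
    (hindep : ∀ (n : ℕ) (c : Fin n → ℤ),
      (List.ofFn fun k : Fin n => z (k + 1) ^ c k).prod = 1 →
      ∀ k : Fin n, (p : ℤ) ∣ c k)
    (A B : Subgroup H) [B.Normal]
    (hmeet : A ⊓ B = ⊥) (hjoin : A ⊔ B = ⊤)
    (hcomm : ∀ a ∈ A, ∀ b ∈ B, a * b = b * a) :
    A = ⊥ ∨ B = ⊥ := by
  have hx := closure_range_eq_top hrel hgen
  choose a ha b hb hab using fun m => mem_sup_of_normal_right.mp (hjoin ▸ mem_top (x m))
  have hcomm' : ∀ b ∈ B, ∀ a ∈ A, b * a = a * b := fun b hb a ha => (hcomm a ha b hb).symm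
  have hba : ∀ m, b m * a m = x m := fun m => (hcomm' _ (hb m) _ (ha m)).trans (hab m)
  choose l hl using fun m => exists_centralCommutator_eq_zpow (hnil := hnil) hrel hindep hexp hx
    (by rw [← hab m, centralCommutator_mul_right_of_commute (hcomm _ (ha m) _ (hb m)),
      centralCommutator_self])
  by_cases hA : ∀ m, (p : ℤ) ∣ l m
  · refine Or.inl (eq_bot_of_centralCommutator_eq_one (hnil := hnil) hrel hindep hexp hx
      hmeet hcomm ha hb hab fun m k hmk => ?_)
    rw [hl m k hmk]
    exact zpow_eq_one_of_dvd (center_pow_eq_one hexp _) (hA m)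
  · obtain ⟨m', hm'⟩ := not_forall.mp hA
    refine Or.inr (eq_bot_of_centralCommutator_eq_one (hnil := hnil) hrel hindep hexp hx
      (inf_comm A B ▸ hmeet) hcomm' hb ha hba fun m k hmk => ?_)
    have hdvd := dvd_mul_one_sub_of_inf_eq_bot hrel hindep hmeet hcomm ha hb hab hl m m'
    rw [centralCommutator_right_factor hrel (hab m) hmk (hl m k hmk)]
    exact zpow_eq_one_of_dvd (center_pow_eq_one hexp _)
      (((Nat.prime_iff_prime_int.mp hp).dvd_or_dvd hdvd).resolve_left hm')

/-- Let `H` be the group in the variety of exponent-`p`, class-2 nilpotent groups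
with generators `x_i` and central generators `z_k` (`k ≥ 1`), `[x_i, x_k] = z_k`
for `i < k`, the `z_k` linearly independent over `ℤ/pℤ`. Then `H` is directly
indecomposable: if `H = A × B` (internal direct product) then `A = {1}` or
`B = {1}`. -/
theorem stmt11 {p : ℕ} (hp : p.Prime) (hodd : Odd p) {H : Type*} [Group H]
    (hexp : ∀ g : H, g ^ p = 1)
    (hnil : ∀ a b : H, a⁻¹ * b⁻¹ * a * b ∈ Subgroup.center H)
    (x z : ℕ → H)
    (hrel : ∀ i k : ℕ, i < k → (x i)⁻¹ * (x k)⁻¹ * x i * x k = z k)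
    (hzc : ∀ k : ℕ, 1 ≤ k → z k ∈ Subgroup.center H)
    (hgen : Subgroup.closure (Set.range x ∪ Set.range (fun k => z (k + 1))) = ⊤)
    (hindep : ∀ (n : ℕ) (c : Fin n → ℤ),
      (List.ofFn fun k : Fin n => z (k + 1) ^ c k).prod = 1 →
      ∀ k : Fin n, (p : ℤ) ∣ c k)
    (A B : Subgroup H) [A.Normal] [B.Normal]
    (hmeet : A ⊓ B = ⊥) (hjoin : A ⊔ B = ⊤)
    (hcomm : ∀ a ∈ A, ∀ b ∈ B, a * b = b * a) :
    A = ⊥ ∨ B = ⊥ :=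
  stmt11_general hp hexp hnil x z hrel hgen hindep A B hmeet hjoin hcomm
end

section
/- Let L be the group with generators x, y_i, z_k (i, k ∈ ℕ) and relations y_i² = z_k² = 1, [y_i, z_k] = [y_i, x] = 1, [z_k, z_l] = 1, and z_i⁻¹ x z_i = x y_i. Then the subgroup A generated by x² and all y_i is contained in the centre of L, and L/A is an elementary abelian 2-group. -/
/-- If every generator commutes with `c`, then `c` is central. -/
lemma stmt18_central_of_gen {G : Type*} [Group G] {S : Set G}
    (hS : Subgroup.closure S = ⊤) {c : G} (h : ∀ s ∈ S, s * c = c * s) :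
    c ∈ Subgroup.center G := by
  rw [Subgroup.mem_center_iff]
  intro g
  have hg : g ∈ Subgroup.closure S := hS ▸ Subgroup.mem_top g
  induction hg using Subgroup.closure_induction with
  | mem s hs => exact h s hs
  | one => rw [one_mul, mul_one]
  | mul a b _ _ ha hb => rw [mul_assoc, hb, ← mul_assoc, ha, mul_assoc]
  | inv a _ ha =>
      have := congrArg (fun t => a⁻¹ * t * a⁻¹) ha
      simpa [mul_assoc] using this.symm

/-- Let `L` be the group generated by `x`, `y_i`, `z_k` (`i, k ∈ ℕ`) with relations
`y_i² = z_k² = 1`, `[y_i, z_k] = [y_i, x] = 1`, `[z_k, z_l] = 1`, and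
`z_i⁻¹ x z_i = x y_i`. Then the subgroup `A = ⟨x², {y_i}⟩` is contained in the
centre of `L`, and `L/A` is an elementary abelian 2-group (every element squares
into `A`, and all commutators lie in `A`). -/
theorem stmt18 {L : Type*} [Group L] (x : L) (y z : ℕ → L)
    (hgen : Subgroup.closure (insert x (Set.range y ∪ Set.range z)) = ⊤)
    (hy2 : ∀ i, y i ^ 2 = 1) (hz2 : ∀ k, z k ^ 2 = 1)
    (hyz : ∀ i k, y i * z k = z k * y i)
    (hyx : ∀ i, y i * x = x * y i)
    (hzz : ∀ k l, z k * z l = z l * z k)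
    (hconj : ∀ i, (z i)⁻¹ * x * z i = x * y i) :
    Subgroup.closure (insert (x ^ 2) (Set.range y)) ≤ Subgroup.center L ∧
    (∀ g : L, g * g ∈ Subgroup.closure (insert (x ^ 2) (Set.range y))) ∧
    (∀ g h : L, g⁻¹ * h⁻¹ * g * h ∈ Subgroup.closure (insert (x ^ 2) (Set.range y))) := by
  set S : Set L := insert x (Set.range y ∪ Set.range z) with hS
  set A : Subgroup L := Subgroup.closure (insert (x ^ 2) (Set.range y)) with hA
  -- basic rewriting of hconj : x * z i = z i * x * y i
  have hxz : ∀ i, x * z i = z i * (x * y i) := by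
    intro i
    have := hconj i
    calc x * z i = z i * ((z i)⁻¹ * x * z i) := by group
    _ = z i * (x * y i) := by rw [this]
  -- y i expressed in x, z
  have hyexp : ∀ i, y i = x⁻¹ * ((z i)⁻¹ * x * z i) := by
    intro i; rw [hconj i]; group
  -- y j commutes with y i
  have hyy : ∀ i j, y i * y j = y j * y i := by
    intro i j
    have cx : Commute (y j) x := hyx j
    have cz : Commute (y j) (z i) := hyz j i
    have : Commute (y j) (x⁻¹ * ((z i)⁻¹ * x * z i)) :=
      cx.inv_right.mul_right ((cz.inv_right.mul_right cx).mul_right cz)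
    rw [hyexp i]; exact this.symm
  -- x^2 commutes with z k
  have hx2z : ∀ k, x ^ 2 * z k = z k * x ^ 2 := by
    intro k
    have : x ^ 2 * z k = x * (x * z k) := by rw [pow_two, mul_assoc]
    rw [this, hxz k, ← mul_assoc, hxz k]
    have : z k * (x * y k) * (x * y k) = z k * (x * (y k * x) * y k) := by group
    rw [this, hyx k]
    have hy2' : y k * y k = 1 := by have := hy2 k; rwa [pow_two] at this
    calc z k * (x * (x * y k) * y k) = z k * (x * x) * (y k * y k) := by group
    _ = z k * x ^ 2 := by rw [hy2', mul_one, pow_two]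
  -- generators of A are central
  have hycen : ∀ i, y i ∈ Subgroup.center L := by
    intro i
    apply stmt18_central_of_gen hgen
    rintro s (rfl | ⟨j, rfl⟩ | ⟨k, rfl⟩)
    · exact (hyx i).symm
    · exact hyy j i
    · exact (hyz i k).symm
  have hx2cen : x ^ 2 ∈ Subgroup.center L := by
    apply stmt18_central_of_gen hgen
    rintro s (rfl | ⟨j, rfl⟩ | ⟨k, rfl⟩)
    · group
    · have : Commute (y j) (x ^ 2) := (Commute.pow_right (hyx j) 2)
      exact this
    · exact (hx2z k).symm
  have hAle : A ≤ Subgroup.center L := by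
    rw [hA, Subgroup.closure_le]
    rintro a (rfl | ⟨i, rfl⟩)
    · exact hx2cen
    · exact hycen i
  refine ⟨hAle, ?_⟩
  -- A is normal
  haveI hAnormal : A.Normal := by
    constructor
    intro a ha g
    have hc := (Subgroup.mem_center_iff.mp (hAle ha)) g
    have : g * a * g⁻¹ = a := by rw [hc]; group
    rwa [this]
  -- quotient
  set φ : L →* L ⧸ A := QuotientGroup.mk' A with hφ
  have hsurj : Function.Surjective φ := QuotientGroup.mk'_surjective A
  have hQgen : Subgroup.closure (φ '' S) = (⊤ : Subgroup (L ⧸ A)) := by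
    rw [← MonoidHom.map_closure, hgen]
    exact Subgroup.map_top_of_surjective φ hsurj
  have hyA : ∀ i, φ (y i) = 1 := by
    intro i
    rw [hφ, QuotientGroup.mk'_apply, QuotientGroup.eq_one_iff]
    exact Subgroup.subset_closure (Set.mem_insert_of_mem _ ⟨i, rfl⟩)
  have hx2A : φ (x ^ 2) = 1 := by
    rw [hφ, QuotientGroup.mk'_apply, QuotientGroup.eq_one_iff]
    exact Subgroup.subset_closure (Set.mem_insert _ _)
  -- images of generators commute pairwise
  have hxzQ : ∀ k, φ x * φ (z k) = φ (z k) * φ x := by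
    intro k
    have : φ (x * z k) = φ (z k * (x * y k)) := by rw [hxz k]
    rw [map_mul, map_mul, map_mul, hyA k, mul_one] at this
    exact this
  have hgencomm : ∀ s ∈ S, ∀ t ∈ S, φ s * φ t = φ t * φ s := by
    rintro s hs t (rfl | ⟨j, rfl⟩ | ⟨k, rfl⟩)
    · rcases hs with rfl | ⟨j, rfl⟩ | ⟨k, rfl⟩
      · rfl
      · rw [hyA j, one_mul, mul_one]
      · exact (hxzQ k).symm
    · rw [hyA j, one_mul, mul_one]
    · rcases hs with rfl | ⟨j, rfl⟩ | ⟨l, rfl⟩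
      · exact hxzQ k
      · rw [hyA j, one_mul, mul_one]
      · rw [← map_mul, ← map_mul, hzz l k]
  -- quotient is abelian
  have hQcomm : ∀ a b : L ⧸ A, a * b = b * a := by
    have hcen : ∀ a : L ⧸ A, a ∈ Subgroup.center (L ⧸ A) := by
      intro a
      have : Subgroup.closure (φ '' S) ≤ Subgroup.center (L ⧸ A) := by
        rw [Subgroup.closure_le]
        rintro q ⟨s, hs, rfl⟩
        apply stmt18_central_of_gen hQgen
        rintro t ⟨u, hu, rfl⟩
        exact hgencomm u hu s hs
      exact this (hQgen ▸ Subgroup.mem_top a)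
    intro a b
    exact ((Subgroup.mem_center_iff.mp (hcen a)) b).symm
  -- every element of the quotient squares to 1
  have hsq : ∀ q : L ⧸ A, q * q = 1 := by
    intro q
    have hq : q ∈ Subgroup.closure (φ '' S) := hQgen ▸ Subgroup.mem_top q
    induction hq using Subgroup.closure_induction with
    | mem s hs =>
        obtain ⟨u, hu, rfl⟩ := hs
        rcases hu with rfl | ⟨j, rfl⟩ | ⟨k, rfl⟩
        · rw [← map_mul, ← pow_two, hx2A]
        · rw [hyA j, one_mul]
        · rw [← map_mul, ← pow_two, hz2 k, map_one]
    | one => rw [one_mul]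
    | mul a b _ _ ha hb =>
        calc a * b * (a * b) = (a * a) * (b * b) := by
              rw [mul_assoc, ← mul_assoc b a b, hQcomm b a]; group
        _ = 1 := by rw [ha, hb, one_mul]
    | inv a _ ha =>
        calc a⁻¹ * a⁻¹ = (a * a)⁻¹ := by group
        _ = 1 := by rw [ha, inv_one]
  have hmemA : ∀ g : L, φ g = 1 → g ∈ A := by
    intro g hg
    rwa [hφ, QuotientGroup.mk'_apply, QuotientGroup.eq_one_iff] at hg
  constructor
  · intro g
    exact hmemA _ (by rw [map_mul]; exact hsq (φ g))
  · intro g h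
    apply hmemA
    rw [map_mul, map_mul, map_mul, map_inv, map_inv]
    rw [hQcomm (φ g)⁻¹ (φ h)⁻¹]
    group
end
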